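/- arXiv:1210.4594 — 7 statements merged into one kernel-verified Lean document; each statement's English description precedes it below -/
import Mathlib

section
/- If (u, v) is a matched edge in graph G with matching M, then tenacity(u) = tenacity(v) = tenacity(u, v). -/
attribute [local instance] Classical.propDecidable

variable {V : Type*} [DecidableEq V]

namespace MV

/-- A walk is alternating (w.r.t. matching `M`) in the sense used for alternating paths
starting at an unmatched vertex: the `i`-th edge is matched iff `i` is odd. -/
def IsAlt (G : SimpleGraph V) (M : G.Subgraph) {a b : V} (w : G.Walk a b) : Prop :=
  ∀ i (h : i < w.edges.length), (w.edges.get ⟨i, h⟩ ∈ M.edgeSet ↔ Odd i)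

/-- length of a minimum even alternating path from an unmatched vertex to `v`. -/
noncomputable def evenlevel (G : SimpleGraph V) (M : G.Subgraph) (v : V) : ℕ∞ :=
  sInf {n : ℕ∞ | ∃ (f : V) (w : G.Walk f v),
    f ∉ M.verts ∧ w.IsPath ∧ IsAlt G M w ∧ Even w.length ∧ n = (w.length : ℕ∞)}

/-- length of a minimum odd alternating path from an unmatched vertex to `v`. -/
noncomputable def oddlevel (G : SimpleGraph V) (M : G.Subgraph) (v : V) : ℕ∞ :=
  sInf {n : ℕ∞ | ∃ (f : V) (w : G.Walk f v),
    f ∉ M.verts ∧ w.IsPath ∧ IsAlt G M w ∧ Odd w.length ∧ n = (w.length : ℕ∞)}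

noncomputable def tenacity (G : SimpleGraph V) (M : G.Subgraph) (v : V) : ℕ∞ :=
  evenlevel G M v + oddlevel G M v

noncomputable def minlevel (G : SimpleGraph V) (M : G.Subgraph) (v : V) : ℕ∞ :=
  min (evenlevel G M v) (oddlevel G M v)

noncomputable def maxlevel (G : SimpleGraph V) (M : G.Subgraph) (v : V) : ℕ∞ :=
  max (evenlevel G M v) (oddlevel G M v)

/-- the length of a minimum length augmenting path w.r.t. `M` (`⊤` if none exists). -/
noncomputable def lm (G : SimpleGraph V) (M : G.Subgraph) : ℕ∞ :=
  sInf {n : ℕ∞ | ∃ (f g : V) (w : G.Walk f g), f ∉ M.verts ∧ g ∉ M.verts ∧ f ≠ g ∧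
    w.IsPath ∧ IsAlt G M w ∧ Odd w.length ∧ n = (w.length : ℕ∞)}

/-- `w` is a minimum even- or odd-length alternating path from an unmatched vertex to `v`
  (an `evenlevel(v)` or `oddlevel(v)` path). -/
def IsMinPathTo (G : SimpleGraph V) (M : G.Subgraph) (v f : V) (w : G.Walk f v) : Prop :=
  f ∉ M.verts ∧ w.IsPath ∧ IsAlt G M w ∧
    ((Even w.length ∧ (w.length : ℕ∞) = evenlevel G M v) ∨
     (Odd w.length ∧ (w.length : ℕ∞) = oddlevel G M v))

/-- `b` is the vertex of tenacity greater than `tenacity v` on `w` furthest from the start. -/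
def IsFurthestHigh (G : SimpleGraph V) (M : G.Subgraph) (v : V) {f v' : V}
    (w : G.Walk f v') (b : V) : Prop :=
  ∃ hb : b ∈ w.support, tenacity G M v < tenacity G M b ∧
    ∀ u, ∀ hu : u ∈ w.support, tenacity G M v < tenacity G M u →
      (w.takeUntil u hu).length ≤ (w.takeUntil b hb).length

/-- `b` is the base of `v`: the furthest higher-tenacity vertex on every minimum
even or odd alternating path to `v`. -/
def IsBase (G : SimpleGraph V) (M : G.Subgraph) (v b : V) : Prop :=
  ∀ (f : V) (w : G.Walk f v), IsMinPathTo G M v f w → IsFurthestHigh G M v w b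

/-- minimum even length alternating path from `b` to `v` starting with an unmatched edge
  (`evenlevel(b; v)`). -/
noncomputable def evenlevelFrom (G : SimpleGraph V) (M : G.Subgraph) (b v : V) : ℕ∞ :=
  sInf {n : ℕ∞ | ∃ w : G.Walk b v,
    w.IsPath ∧ IsAlt G M w ∧ Even w.length ∧ n = (w.length : ℕ∞)}

/-- minimum odd length alternating path from `b` to `v` starting with an unmatched edge
  (`oddlevel(b; v)`). -/
noncomputable def oddlevelFrom (G : SimpleGraph V) (M : G.Subgraph) (b v : V) : ℕ∞ :=
  sInf {n : ℕ∞ | ∃ w : G.Walk b v,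
    w.IsPath ∧ IsAlt G M w ∧ Odd w.length ∧ n = (w.length : ℕ∞)}

def Outer (G : SimpleGraph V) (M : G.Subgraph) (v : V) : Prop :=
  evenlevel G M v < oddlevel G M v

/-- The blossom `B_{b,t}`, defined recursively, relative to a base function `bse`. -/
noncomputable def blossom (G : SimpleGraph V) (M : G.Subgraph) (bse : V → V) :
    ℕ → V → Set V
  | 0, _ => ∅
  | 1, _ => ∅
  | (t + 2), b =>
      {v | tenacity G M v = ((t + 2 : ℕ) : ℕ∞) ∧ bse v = b} ∪
      ⋃ v ∈ {u | (u = b ∨ (tenacity G M u = ((t + 2 : ℕ) : ℕ∞) ∧ bse u = b)) ∧ Outer G M u},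
        blossom G M bse t v

/-- The nesting depth `N(B_{b,t})`. -/
noncomputable def nestDepth (G : SimpleGraph V) (M : G.Subgraph) (bse : V → V) :
    ℕ → V → ℕ
  | 0, _ => 0
  | 1, _ => 0
  | (t + 2), b =>
      if {v | tenacity G M v = ((t + 2 : ℕ) : ℕ∞) ∧ bse v = b}.Nonempty then
        1 + sSup ((fun v => nestDepth G M bse t v) ''
          {u | (u = b ∨ (tenacity G M u = ((t + 2 : ℕ) : ℕ∞) ∧ bse u = b)) ∧ Outer G M u})
      else nestDepth G M bse t b

/-- `bse` assigns to each vertex of tenacity `< l_m` its (unique) base. -/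
def BaseFn (G : SimpleGraph V) (M : G.Subgraph) (bse : V → V) : Prop :=
  ∀ v, tenacity G M v < lm G M → IsBase G M v (bse v)

/-- `u` is a predecessor of `v`: `(u,v)` is the last edge of some `minlevel(v)` path. -/
def IsPred (G : SimpleGraph V) (M : G.Subgraph) (u v : V) : Prop :=
  ∃ (f : V) (w : G.Walk f v), f ∉ M.verts ∧ w.IsPath ∧ IsAlt G M w ∧
    (w.length : ℕ∞) = minlevel G M v ∧
    0 < w.length ∧ w.getVert (w.length - 1) = u

/-- A bridge is an edge of `G` that is not a prop. -/
def IsBridge (G : SimpleGraph V) (M : G.Subgraph) (u v : V) : Prop :=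
  G.Adj u v ∧ ¬ IsPred G M u v ∧ ¬ IsPred G M v u

/-- tenacity of an edge. -/
noncomputable def edgeTenacity (G : SimpleGraph V) (M : G.Subgraph) (u v : V) : ℕ∞ :=
  if s(u, v) ∈ M.edgeSet then oddlevel G M u + oddlevel G M v + 1
  else evenlevel G M u + evenlevel G M v + 1

/-
Along an alternating path from an unmatched vertex the `i`-th edge is matched exactly when `i` is
odd. Hence a shortest even alternating path to `u` ends with the matched edge `(v, u)`, and
dropping that edge leaves an odd alternating path to `v`; conversely a shortest odd alternating
path to `v` extends by `(v, u)`. So `evenlevel u = oddlevel v + 1`, and symmetrically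
`evenlevel v = oddlevel u + 1`.
-/

open SimpleGraph Walk

section

-- A fresh `V`, so that these lemmas do not pick up the ambient `[DecidableEq V]`.
variable {V : Type*} {G : SimpleGraph V} {M : G.Subgraph}

lemma isAlt_iff_getVert {a b : V} (w : G.Walk a b) :
    IsAlt G M w ↔ ∀ i < w.length, (s(w.getVert i, w.getVert (i + 1)) ∈ M.edgeSet ↔ Odd i) := by
  simp only [IsAlt, List.get_eq_getElem, getElem_edges, length_edges]

lemma isAlt_concat_iff {a b c : V} (w : G.Walk a b) (h : G.Adj b c) :
    IsAlt G M (w.concat h) ↔ IsAlt G M w ∧ (s(b, c) ∈ M.edgeSet ↔ Odd w.length) := by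
  simp only [IsAlt, List.get_eq_getElem, edges_concat, List.concat_eq_append,
    List.length_append, List.length_singleton]
  rw [Nat.forall_lt_succ_right']
  refine and_congr (forall₂_congr fun i hi => ?_) ?_
  · rw [List.getElem_append_left]
  · simp [length_edges]

/-- The matched partner of the vertex at an inner position `k` of such a path sits at position
`k + 1` if `k` is odd and at `k - 1` if `k` is even, so it cannot be the odd endpoint. -/
lemma notMem_support_of_isAlt_of_odd (hM : M.IsMatching) {f u v : V} (huv : M.Adj u v)
    {w : G.Walk f v} (hf : f ∉ M.verts) (hp : w.IsPath) (halt : IsAlt G M w)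
    (hodd : Odd w.length) : u ∉ w.support := by
  rw [isAlt_iff_getVert] at halt
  intro hu
  obtain ⟨k, rfl, hk⟩ := mem_support_iff_exists_getVert.1 hu
  have at_end : ∀ j ≤ w.length, w.getVert j = v → j = w.length := fun j hj hjv =>
    hp.getVert_injOn hj (le_refl w.length) (hjv.trans w.getVert_length.symm)
  rcases Nat.even_or_odd k with hk_even | hk_odd
  · obtain ⟨j, rfl⟩ : ∃ j, k = j + 1 :=
      Nat.exists_eq_succ_of_ne_zero (by rintro rfl; exact hf (by simpa using M.edge_vert huv))
    have hj_odd : Odd j := by simpa [Nat.even_add_one] using hk_even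
    have hmatched : M.Adj (w.getVert j) (w.getVert (j + 1)) := (halt j (by omega)).2 hj_odd
    have := at_end j (by omega) (hM.eq_of_adj_left (M.adj_symm hmatched) huv)
    omega
  · have hk_lt : k < w.length := lt_of_le_of_ne hk (by rintro rfl; exact huv.ne w.getVert_length)
    have hmatched : M.Adj (w.getVert k) (w.getVert (k + 1)) := (halt k hk_lt).2 hk_odd
    have := at_end (k + 1) hk_lt (hM.eq_of_adj_left hmatched huv)
    rw [← this, Nat.odd_add_one, Nat.not_odd_iff_even] at hodd
    exact Nat.not_even_iff_odd.2 hk_odd hodd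

lemma evenlevel_le_oddlevel_add_one (hM : M.IsMatching) {u v : V} (huv : M.Adj u v) :
    evenlevel G M u ≤ oddlevel G M v + 1 := by
  by_cases htop : oddlevel G M v = ⊤
  · simp [htop]
  obtain ⟨f, w, hf, hp, halt, hodd, hlen⟩ : oddlevel G M v ∈ _ :=
    csInf_mem (Set.nonempty_iff_ne_empty.2 fun h => htop (by rw [oddlevel, h, sInf_empty]))
  have hvu : G.Adj v u := (M.adj_symm huv).adj_sub
  have hu := notMem_support_of_isAlt_of_odd hM huv hf hp halt hodd
  calc evenlevel G M u ≤ (w.concat hvu).length :=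
        sInf_le ⟨f, w.concat hvu, hf, hp.concat hu hvu,
          (isAlt_concat_iff w hvu).2 ⟨halt, iff_of_true (M.adj_symm huv) hodd⟩,
          by simpa [Nat.even_add_one] using hodd, rfl⟩
    _ = oddlevel G M v + 1 := by rw [hlen, length_concat]; push_cast; rfl

lemma oddlevel_add_one_le_evenlevel (hM : M.IsMatching) {u v : V} (huv : M.Adj u v) :
    oddlevel G M v + 1 ≤ evenlevel G M u := by
  refine le_sInf ?_
  rintro _ ⟨f, w, hf, hp, halt, heven, rfl⟩
  cases w with
  | nil => exact absurd (M.edge_vert huv) hf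
  | cons h p =>
    obtain ⟨x, q, hxu, hq⟩ := exists_cons_eq_concat h p
    rw [hq] at hp halt heven ⊢
    rw [isAlt_concat_iff] at halt
    have hq_odd : Odd q.length := by simpa [Nat.even_add_one] using heven
    obtain rfl : x = v := hM.eq_of_adj_right (halt.2.2 hq_odd) (M.adj_symm huv)
    calc oddlevel G M x + 1 ≤ q.length + 1 := by
          gcongr
          exact sInf_le ⟨f, q, hf, ((concat_isPath_iff hxu).1 hp).1, halt.1, hq_odd, rfl⟩
      _ = (q.concat hxu).length := by rw [length_concat]; push_cast; rfl

lemma evenlevel_eq_oddlevel_add_one (hM : M.IsMatching) {u v : V} (huv : M.Adj u v) :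
    evenlevel G M u = oddlevel G M v + 1 :=
  (evenlevel_le_oddlevel_add_one hM huv).antisymm (oddlevel_add_one_le_evenlevel hM huv)

end

theorem stmt0_general (G : SimpleGraph V) (M : G.Subgraph) (hM : M.IsMatching)
    (u v : V) (huv : s(u, v) ∈ M.edgeSet) :
    tenacity G M u = oddlevel G M u + oddlevel G M v + 1 ∧
    tenacity G M v = oddlevel G M u + oddlevel G M v + 1 := by
  have huv : M.Adj u v := huv
  constructor
  · rw [tenacity, evenlevel_eq_oddlevel_add_one hM huv]; ring
  · rw [tenacity, evenlevel_eq_oddlevel_add_one hM (M.adj_symm huv)]; ring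

/-- If `(u, v)` is a matched edge then `tenacity(u) = tenacity(v) = tenacity(u, v)`. -/
theorem stmt0 (G : SimpleGraph V) (M : G.Subgraph) (hM : M.IsMatching)
    (hex : ∃ x, x ∉ M.verts)
    (u v : V) (huv : s(u, v) ∈ M.edgeSet) :
    tenacity G M u = oddlevel G M u + oddlevel G M v + 1 ∧
    tenacity G M v = oddlevel G M u + oddlevel G M v + 1 :=
  stmt0_general G M hM u v huv

end MV
end

section
/- Let p be an evenlevel(v) or oddlevel(v) path and let vertex u lie on p with tenacity(u) ≥ tenacity(v). Then u is BFS-honest with respect to p; furthermore, if tenacity(u) > tenacity(v), then the length of p from its starting unmatched vertex f to u equals minlevel(u). -/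
attribute [local instance] Classical.propDecidable

variable {V : Type*} [DecidableEq V]

/-!
Split the path as `w₁ ++ w₂` at `u`, with `k = |w₁|` and `s = |w₂|`. An alternating path `r` from
an unmatched vertex that ends on `w₂` can be cut at its first vertex on `w₂` and continued along
`w₂`, either forward to `v` or backward to `u`, whichever keeps it alternating. Forward,
minimality of `w₁ ++ w₂` forces `|r| ≥ k`; backward gives an alternating path to `u` of the parity
of `k + 1` and length at most `|r| + s`. Applied to a shortest path to `v` of the other parity,
this yields `tenacity v ≥ level (k + 1) u + k` or `tenacity v ≥ 2k + s`. Applied to a shorter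
path to `u` of the parity of `k`, either alternative contradicts `tenacity v ≤ tenacity u`; and
when `tenacity v < tenacity u` the same dichotomy leaves only `level (k + 1) u ≥ k`.
-/

namespace SimpleGraph.Walk

omit [DecidableEq V]

variable {G : SimpleGraph V}

theorem exists_eq_append_first_mem {a b : V} (p : G.Walk a b) (S : Set V) (hb : b ∈ S) :
    ∃ (c : V) (q : G.Walk a c) (r : G.Walk c b),
      p = q.append r ∧ c ∈ S ∧ ∀ x ∈ q.support, x ∈ S → x = c := by
  induction p with
  | nil => exact ⟨_, nil, nil, rfl, hb, by simp⟩
  | @cons a a' b h p ih =>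
    by_cases ha : a ∈ S
    · exact ⟨a, nil, cons h p, rfl, ha, by simp⟩
    · obtain ⟨c, q, r, rfl, hc, hfirst⟩ := ih hb
      refine ⟨c, cons h q, r, rfl, hc, ?_⟩
      intro x hx hxS
      rw [support_cons, List.mem_cons] at hx
      rcases hx with rfl | hx
      · exact absurd hxS ha
      · exact hfirst x hx hxS

theorem IsPath.append {a b c : V} {p : G.Walk a b} {q : G.Walk b c} (hp : p.IsPath)
    (hq : q.IsPath) (hpq : ∀ x ∈ p.support, x ∈ q.support → x = b) : (p.append q).IsPath := by
  rw [isPath_def, support_append, List.nodup_append]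
  refine ⟨hp.support_nodup, hq.support_nodup.tail, ?_⟩
  rintro x hxp _ hxq rfl
  obtain rfl := hpq x hxp (List.mem_of_mem_tail hxq)
  have hnodup := hq.support_nodup
  rw [← cons_tail_support] at hnodup
  exact (List.nodup_cons.mp hnodup).1 hxq

end SimpleGraph.Walk

namespace MV

open SimpleGraph

section

omit [DecidableEq V]

variable {G : SimpleGraph V} {M : G.Subgraph} {p q : ℕ} {v : V}

/-- `w` alternates like the part of an alternating path that follows its first `p` edges. -/
def IsAltFrom (G : SimpleGraph V) (M : G.Subgraph) (p : ℕ) {a b : V} (w : G.Walk a b) :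
    Prop :=
  ∀ i (h : i < w.edges.length), (w.edges[i] ∈ M.edgeSet ↔ (p + i) % 2 = 1)

theorem isAlt_iff_isAltFrom_zero {a b : V} {w : G.Walk a b} :
    IsAlt G M w ↔ IsAltFrom G M 0 w := by
  simp only [IsAlt, IsAltFrom, List.get_eq_getElem, zero_add, Nat.odd_iff]

theorem IsAltFrom.of_mod_two_eq {a b : V} {w : G.Walk a b} (h : IsAltFrom G M p w)
    (hpq : p % 2 = q % 2) : IsAltFrom G M q w := by
  intro i hi
  rw [h i hi]
  omega

theorem isAltFrom_append_iff {a b c : V} {w₁ : G.Walk a b} {w₂ : G.Walk b c} :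
    IsAltFrom G M p (w₁.append w₂) ↔
      IsAltFrom G M p w₁ ∧ IsAltFrom G M (p + w₁.length) w₂ := by
  have hlen : w₁.edges.length = w₁.length := w₁.length_edges
  simp only [IsAltFrom, Walk.edges_append, List.length_append]
  constructor
  · intro h
    refine ⟨fun i hi => ?_, fun i hi => ?_⟩
    · simpa [List.getElem_append_left hi] using h i (by omega)
    · have := h (w₁.edges.length + i) (by omega)
      rw [List.getElem_append_right (by omega)] at this
      simpa [hlen, Nat.add_assoc] using this
  · rintro ⟨h₁, h₂⟩ i hi
    by_cases hi₁ : i < w₁.edges.length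
    · rw [List.getElem_append_left hi₁]
      exact h₁ i hi₁
    · rw [List.getElem_append_right (by omega), h₂ _ (by omega)]
      omega

theorem IsAltFrom.reverse {a b : V} {w : G.Walk a b} (h : IsAltFrom G M p w)
    (hq : (p + w.length + 1) % 2 = q % 2) : IsAltFrom G M q w.reverse := by
  have hlen : w.edges.length = w.length := w.length_edges
  intro i hi
  simp only [Walk.edges_reverse, List.length_reverse] at hi ⊢
  rw [List.getElem_reverse, h _ (by omega)]
  omega

noncomputable def level (G : SimpleGraph V) (M : G.Subgraph) (p : ℕ) (v : V) : ℕ∞ :=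
  sInf {n : ℕ∞ | ∃ (f : V) (w : G.Walk f v),
    f ∉ M.verts ∧ w.IsPath ∧ IsAlt G M w ∧ w.length % 2 = p % 2 ∧ n = (w.length : ℕ∞)}

theorem level_eq_evenlevel (hp : p % 2 = 0) : level G M p v = evenlevel G M v := by
  simp only [level, evenlevel, Nat.even_iff, hp]

theorem level_eq_oddlevel (hp : p % 2 = 1) : level G M p v = oddlevel G M v := by
  simp only [level, oddlevel, Nat.odd_iff, hp]

theorem tenacity_eq_level_add_level_succ (p : ℕ) (v : V) :
    tenacity G M v = level G M p v + level G M (p + 1) v := by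
  rcases Nat.mod_two_eq_zero_or_one p with hp | hp
  · rw [level_eq_evenlevel hp, level_eq_oddlevel (by omega), tenacity]
  · rw [level_eq_oddlevel hp, level_eq_evenlevel (by omega), tenacity, add_comm]

theorem minlevel_eq_min_level_level_succ (p : ℕ) (v : V) :
    minlevel G M v = min (level G M p v) (level G M (p + 1) v) := by
  rcases Nat.mod_two_eq_zero_or_one p with hp | hp
  · rw [level_eq_evenlevel hp, level_eq_oddlevel (by omega), minlevel]
  · rw [level_eq_oddlevel hp, level_eq_evenlevel (by omega), minlevel, min_comm]

theorem level_le_length {f : V} {w : G.Walk f v} (hf : f ∉ M.verts) (hwp : w.IsPath)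
    (hwa : IsAlt G M w) (hp : w.length % 2 = p % 2) : level G M p v ≤ w.length :=
  sInf_le ⟨f, w, hf, hwp, hwa, hp, rfl⟩

theorem exists_length_eq_level (h : level G M p v ≠ ⊤) :
    ∃ (f : V) (w : G.Walk f v), f ∉ M.verts ∧ w.IsPath ∧ IsAlt G M w ∧
      w.length % 2 = p % 2 ∧ (w.length : ℕ∞) = level G M p v := by
  have hne : Set.Nonempty {n : ℕ∞ | ∃ (f : V) (w : G.Walk f v),
      f ∉ M.verts ∧ w.IsPath ∧ IsAlt G M w ∧ w.length % 2 = p % 2 ∧ n = (w.length : ℕ∞)} := by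
    by_contra hempty
    exact h (by rw [level, Set.not_nonempty_iff_eq_empty.mp hempty, sInf_empty])
  obtain ⟨f, w, hf, hwp, hwa, hp, hlen⟩ := csInf_mem hne
  exact ⟨f, w, hf, hwp, hwa, hp, hlen.symm⟩

theorem level_length_eq_of_isMinPathTo {f : V} {w : G.Walk f v}
    (hw : IsMinPathTo G M v f w) : level G M w.length v = w.length := by
  obtain ⟨-, -, -, ⟨hev, h⟩ | ⟨hodd, h⟩⟩ := hw
  · rw [h, level_eq_evenlevel (Nat.even_iff.mp hev)]
  · rw [h, level_eq_oddlevel (Nat.odd_iff.mp hodd)]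

section Splice

variable {f u : V} {w₁ : G.Walk f u} {w₂ : G.Walk u v}

theorem level_succ_le_or_length_le (hwp : (w₁.append w₂).IsPath)
    (hwa : IsAlt G M (w₁.append w₂))
    (hmin : ((w₁.length + w₂.length : ℕ) : ℕ∞) ≤ level G M (w₁.length + w₂.length) v)
    {g z : V} (r : G.Walk g z) (hg : g ∉ M.verts) (hrp : r.IsPath) (hra : IsAlt G M r)
    (hz : z ∈ w₂.support) :
    level G M (w₁.length + 1) u ≤ ↑(r.length + w₂.length) ∨ w₁.length ≤ r.length := by
  obtain ⟨y, r₁, r₂, rfl, hy, hfirst⟩ :=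
    r.exists_eq_append_first_mem {x | x ∈ w₂.support} hz
  obtain ⟨t, x, rfl⟩ := Walk.mem_support_iff_exists_append.mp hy
  rw [isAlt_iff_isAltFrom_zero, isAltFrom_append_iff] at hra
  rw [isAlt_iff_isAltFrom_zero, isAltFrom_append_iff, isAltFrom_append_iff] at hwa
  obtain ⟨hr₁a, -⟩ := hra
  obtain ⟨-, hta, hxa⟩ := hwa
  have hr₁p : r₁.IsPath := hrp.of_append_left
  have htp : t.IsPath := hwp.of_append_right.of_append_left
  have hxp : x.IsPath := hwp.of_append_right.of_append_right
  simp only [Walk.length_append] at hmin ⊢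
  by_cases hpar : r₁.length % 2 = (w₁.length + t.length) % 2
  · right
    have hforward : (r₁.append x).IsPath := hr₁p.append hxp fun a ha₁ ha₂ =>
      hfirst a ha₁ ((Walk.mem_support_append_iff _ _).mpr (Or.inr ha₂))
    have hle := level_le_length hg hforward
      (isAlt_iff_isAltFrom_zero.mpr (isAltFrom_append_iff.mpr
        ⟨hr₁a, hxa.of_mod_two_eq (by omega)⟩))
      (p := w₁.length + (t.length + x.length)) (by simp only [Walk.length_append]; omega)
    have := Nat.cast_le.mp (hmin.trans hle)
    simp only [Walk.length_append] at this
    omega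
  · left
    have hbackward : (r₁.append t.reverse).IsPath :=
      hr₁p.append htp.reverse fun a ha₁ ha₂ =>
        hfirst a ha₁ ((Walk.mem_support_append_iff _ _).mpr (Or.inl (by simpa using ha₂)))
    refine (level_le_length hg hbackward
      (isAlt_iff_isAltFrom_zero.mpr (isAltFrom_append_iff.mpr
        ⟨hr₁a, hta.reverse (by omega)⟩)) ?_).trans ?_
    · simp only [Walk.length_append, Walk.length_reverse]; omega
    · simp only [Walk.length_append, Walk.length_reverse, Nat.cast_le]; omega

theorem level_succ_add_le_tenacity_or (hwp : (w₁.append w₂).IsPath)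
    (hwa : IsAlt G M (w₁.append w₂))
    (hmin : level G M (w₁.length + w₂.length) v = ↑(w₁.length + w₂.length)) :
    level G M (w₁.length + 1) u + w₁.length ≤ tenacity G M v ∨
      ↑(w₁.length + (w₁.length + w₂.length)) ≤ tenacity G M v := by
  rw [tenacity_eq_level_add_level_succ (w₁.length + w₂.length), hmin]
  by_cases htop : level G M (w₁.length + w₂.length + 1) v = ⊤
  · simp [htop]
  obtain ⟨g, ρ, hg, hρp, hρa, -, hρ⟩ := exists_length_eq_level htop
  rw [← hρ]
  rcases level_succ_le_or_length_le hwp hwa hmin.ge ρ hg hρp hρa w₂.end_mem_support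
    with h | h
  · left
    calc level G M (w₁.length + 1) u + w₁.length
        ≤ ↑(ρ.length + w₂.length) + w₁.length := by gcongr
      _ = ↑(w₁.length + w₂.length) + ρ.length := by push_cast; ring
  · right
    exact_mod_cast (by omega : w₁.length + (w₁.length + w₂.length) ≤
      w₁.length + w₂.length + ρ.length)

theorem level_eq_length_of_tenacity_le (hf : f ∉ M.verts) (hwp : (w₁.append w₂).IsPath)
    (hwa : IsAlt G M (w₁.append w₂))
    (hmin : level G M (w₁.length + w₂.length) v = ↑(w₁.length + w₂.length))
    (ht : tenacity G M v ≤ tenacity G M u) : level G M w₁.length u = w₁.length := by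
  have hw₁a : IsAlt G M w₁ := by
    rw [isAlt_iff_isAltFrom_zero, isAltFrom_append_iff] at hwa
    exact isAlt_iff_isAltFrom_zero.mpr hwa.1
  refine (level_le_length hf hwp.of_append_left hw₁a rfl).antisymm (not_lt.mp fun hlt => ?_)
  obtain ⟨g, r, hg, hrp, hra, -, hr⟩ := exists_length_eq_level (ne_top_of_lt hlt)
  have hrk : r.length < w₁.length := by rw [← hr] at hlt; exact_mod_cast hlt
  have hsucc : level G M (w₁.length + 1) u ≤ ↑(r.length + w₂.length) :=
    (level_succ_le_or_length_le hwp hwa hmin.ge r hg hrp hra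
      w₂.start_mem_support).resolve_right (by omega)
  obtain ⟨n, hn⟩ :=
    ENat.ne_top_iff_exists.mp (ne_top_of_le_ne_top (ENat.natCast_ne_top _) hsucc)
  rw [← hn, Nat.cast_le] at hsucc
  have htu : tenacity G M u = ↑(r.length + n) := by
    rw [tenacity_eq_level_add_level_succ w₁.length, ← hr, ← hn, Nat.cast_add]
  rcases level_succ_add_le_tenacity_or hwp hwa hmin with hv | hv
  · rw [← hn] at hv
    have := hv.trans (ht.trans htu.le)
    norm_cast at this
    omega
  · have := hv.trans (ht.trans htu.le)
    norm_cast at this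
    omega

theorem length_le_level_succ_of_tenacity_lt (hf : f ∉ M.verts) (hwp : (w₁.append w₂).IsPath)
    (hwa : IsAlt G M (w₁.append w₂))
    (hmin : level G M (w₁.length + w₂.length) v = ↑(w₁.length + w₂.length))
    (ht : tenacity G M v < tenacity G M u) :
    (w₁.length : ℕ∞) ≤ level G M (w₁.length + 1) u := by
  have htu : tenacity G M u = w₁.length + level G M (w₁.length + 1) u := by
    rw [tenacity_eq_level_add_level_succ w₁.length,
      level_eq_length_of_tenacity_le hf hwp hwa hmin ht.le]
  rw [htu] at ht
  rcases level_succ_add_le_tenacity_or hwp hwa hmin with hv | hv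
  · exact absurd (hv.trans_lt ht) (by rw [add_comm]; exact lt_irrefl _)
  · by_cases htop : level G M (w₁.length + 1) u = ⊤
    · simp [htop]
    obtain ⟨n, hn⟩ := ENat.ne_top_iff_exists.mp htop
    have := hv.trans_lt ht
    rw [← hn] at this ⊢
    norm_cast at this ⊢
    omega

end Splice

end

theorem stmt2_general (G : SimpleGraph V) (M : G.Subgraph)
    (v f : V) (w : G.Walk f v) (hw : IsMinPathTo G M v f w)
    (u : V) (hu : u ∈ w.support) (ht : tenacity G M v ≤ tenacity G M u) :
    ((Even (w.takeUntil u hu).length →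
        (((w.takeUntil u hu).length : ℕ∞)) = evenlevel G M u) ∧
     (Odd (w.takeUntil u hu).length →
        (((w.takeUntil u hu).length : ℕ∞)) = oddlevel G M u)) ∧
    (tenacity G M v < tenacity G M u →
        (((w.takeUntil u hu).length : ℕ∞)) = minlevel G M u) := by
  have hmin := level_length_eq_of_isMinPathTo hw
  obtain ⟨hf, hwp, hwa, -⟩ := hw
  have hsplit := w.take_spec hu
  set w₁ := w.takeUntil u hu
  set w₂ := w.dropUntil u hu
  rw [← hsplit] at hwp hwa hmin
  rw [Walk.length_append] at hmin
  have honest := level_eq_length_of_tenacity_le hf hwp hwa hmin ht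
  refine ⟨⟨fun heven => ?_, fun hodd => ?_⟩, fun hlt => ?_⟩
  · rw [← level_eq_evenlevel (Nat.even_iff.mp heven), honest]
  · rw [← level_eq_oddlevel (Nat.odd_iff.mp hodd), honest]
  · rw [minlevel_eq_min_level_level_succ w₁.length, honest,
      min_eq_left (length_le_level_succ_of_tenacity_lt hf hwp hwa hmin hlt)]

/-- Limited BFS-honesty: if `u` lies on an `evenlevel(v)` or `oddlevel(v)` path `w`
with `tenacity(u) ≥ tenacity(v)`, then `u` is BFS-honest w.r.t. `w`; and if
`tenacity(u) > tenacity(v)` then the distance from the start to `u` equals `minlevel(u)`. -/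
theorem stmt2 (G : SimpleGraph V) (M : G.Subgraph) (hM : M.IsMatching)
    (v f : V) (w : G.Walk f v) (hw : IsMinPathTo G M v f w)
    (u : V) (hu : u ∈ w.support) (ht : tenacity G M v ≤ tenacity G M u) :
    ((Even (w.takeUntil u hu).length →
        (((w.takeUntil u hu).length : ℕ∞)) = evenlevel G M u) ∧
     (Odd (w.takeUntil u hu).length →
        (((w.takeUntil u hu).length : ℕ∞)) = oddlevel G M u)) ∧
    (tenacity G M v < tenacity G M u →
        (((w.takeUntil u hu).length : ℕ∞)) = minlevel G M u) :=
  stmt2_general G M v f w hw u hu ht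

end MV
end

section
/- Let v be a vertex of tenacity t < l_m and let b = base(v). Then every evenlevel(v) (resp. oddlevel(v)) path consists of an evenlevel(b) path concatenated with a minimum even (resp. odd) length alternating path from b to v starting with an unmatched edge. -/
attribute [local instance] Classical.propDecidable

variable {V : Type*} [DecidableEq V]

namespace SimpleGraph.Walk

section

variable {W : Type*} {G : SimpleGraph W}

lemma isPath_append {u v w : W} {p : G.Walk u v} {q : G.Walk v w} (hp : p.IsPath)
    (hq : q.IsPath) (h : ∀ x ∈ p.support, x ∈ q.support → x = v) : (p.append q).IsPath := by
  have hq' := hq.support_nodup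
  rw [← cons_tail_support, List.nodup_cons] at hq'
  rw [isPath_def, support_append]
  refine hp.support_nodup.append hq'.2 fun x hxp hxq => ?_
  obtain rfl := h x hxp (List.mem_of_mem_tail hxq)
  exact hq'.1 hxq

end

variable {G : SimpleGraph V}

lemma length_takeUntil_add_length_dropUntil {u v w : V} (p : G.Walk u v) (h : w ∈ p.support) :
    (p.takeUntil w h).length + (p.dropUntil w h).length = p.length := by
  rw [← length_append, take_spec]

lemma length_takeUntil_lt_of_mem_dropUntil {u v x y : V} {p : G.Walk u v} (hp : p.IsPath)
    (hx : x ∈ p.support) (hy : y ∈ (p.dropUntil x hx).support) (hyx : y ≠ x) :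
    (p.takeUntil x hx).length <
      (p.takeUntil y (p.support_dropUntil_subset_support hx hy)).length := by
  have hsplit : p.support = (p.takeUntil x hx).support ++ (p.dropUntil x hx).support.tail := by
    conv_lhs => rw [← p.take_spec hx]
    exact support_append _ _
  have hyt : y ∉ (p.takeUntil x hx).support := fun h =>
    (p.take_spec hx ▸ hp).ne_of_mem_support_of_append hyx h hy rfl
  rw [length_takeUntil, length_takeUntil, hsplit, List.idxOf_append_of_notMem hyt,
    List.idxOf_append_of_mem (p.takeUntil x hx).end_mem_support]
  exact (List.idxOf_lt_length_of_mem (p.takeUntil x hx).end_mem_support).trans_le (by omega)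

lemma exists_first_mem {u v : V} (p : G.Walk u v) {S : Set V} (hv : v ∈ S) :
    ∃ (x : V) (hx : x ∈ p.support), x ∈ S ∧
      ∀ y ∈ (p.takeUntil x hx).support, y ∈ S → y = x := by
  induction p with
  | nil => exact ⟨_, start_mem_support _, hv, fun y hy _ => by simpa using hy⟩
  | @cons u w v' hadj p ih =>
    by_cases hu : u ∈ S
    · exact ⟨u, start_mem_support _, hu, fun y hy _ => by simpa using hy⟩
    obtain ⟨x, hx, hxS, hfirst⟩ := ih hv
    have hux : u ≠ x := fun h => hu (h ▸ hxS)
    refine ⟨x, List.mem_cons_of_mem _ hx, hxS, fun y hy hyS => ?_⟩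
    rw [takeUntil_cons hx hux, support_cons, List.mem_cons] at hy
    exact hy.elim (fun h => absurd (h ▸ hyS) hu) (hfirst y · hyS)

end SimpleGraph.Walk

namespace MV

open SimpleGraph Walk

section Alternation

variable {W : Type*} {G : SimpleGraph W} {M : G.Subgraph}

/-- `w` alternates like the segment starting at position `k` of an alternating path from an
unmatched vertex. -/
def IsAltOffset (M : G.Subgraph) {x y : W} (w : G.Walk x y) (k : ℕ) : Prop :=
  ∀ i (h : i < w.edges.length), (w.edges[i] ∈ M.edgeSet ↔ Odd (k + i))

lemma isAlt_iff_isAltOffset {x y : W} (w : G.Walk x y) : IsAlt G M w ↔ IsAltOffset M w 0 := by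
  simp [IsAlt, IsAltOffset]

lemma IsAltOffset.of_mod_two_eq {x y : W} {w : G.Walk x y} {k k' : ℕ} (h : IsAltOffset M w k)
    (hk : k % 2 = k' % 2) : IsAltOffset M w k' := by
  intro i hi
  rw [h i hi, Nat.odd_iff, Nat.odd_iff]
  omega

lemma isAltOffset_nil {x : W} (k : ℕ) : IsAltOffset M (nil : G.Walk x x) k :=
  fun _ h => by simp at h

lemma isAltOffset_cons_iff {x y z : W} (h : G.Adj x y) (p : G.Walk y z) (k : ℕ) :
    IsAltOffset M (cons h p) k ↔
      (s(x, y) ∈ M.edgeSet ↔ Odd k) ∧ IsAltOffset M p (k + 1) := by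
  refine ⟨fun H => ⟨by simpa using H 0 (by simp), fun i hi => ?_⟩,
    fun ⟨h0, H⟩ i hi => ?_⟩
  · simpa [add_assoc, add_comm 1 i] using H (i + 1) (by simpa using hi)
  · cases i with
    | zero => simpa using h0
    | succ i => simpa [add_assoc, add_comm 1 i] using H i (by simpa using hi)

lemma isAltOffset_append_iff {x y z : W} (p : G.Walk x y) (q : G.Walk y z) (k : ℕ) :
    IsAltOffset M (p.append q) k ↔ IsAltOffset M p k ∧ IsAltOffset M q (k + p.length) := by
  induction p generalizing k with
  | nil => simp [isAltOffset_nil]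
  | cons h p ih =>
    simp only [cons_append, isAltOffset_cons_iff, ih, length_cons, and_assoc]
    rw [Nat.add_right_comm, add_assoc]

lemma IsAltOffset.reverse {x y : W} {w : G.Walk x y} {k k' : ℕ} (h : IsAltOffset M w k)
    (hk : k' % 2 = (k + w.length + 1) % 2) : IsAltOffset M w.reverse k' := by
  induction w generalizing k k' with
  | nil => exact isAltOffset_nil k'
  | cons hadj p ih =>
    rw [isAltOffset_cons_iff] at h
    rw [reverse_cons, isAltOffset_append_iff, isAltOffset_cons_iff, Sym2.eq_swap]
    refine ⟨ih h.2 (by simp only [length_cons] at hk; omega), ?_, isAltOffset_nil _⟩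
    rw [h.1, length_reverse, Nat.odd_iff, Nat.odd_iff]
    simp only [length_cons] at hk
    omega

end Alternation

section Levels

variable {W : Type*} {G : SimpleGraph W} {M : G.Subgraph}

structure IsFreeAltPath (M : G.Subgraph) {f x : W} (w : G.Walk f x) : Prop where
  start_notMem : f ∉ M.verts
  isPath : w.IsPath
  isAltOffset : IsAltOffset M w 0

def HasAltPathOfLength (M : G.Subgraph) (x : W) (n : ℕ) : Prop :=
  ∃ (f : W) (w : G.Walk f x), IsFreeAltPath M w ∧ w.length = n

lemma IsFreeAltPath.isAlt {f x : W} {w : G.Walk f x} (hw : IsFreeAltPath M w) : IsAlt G M w :=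
  (isAlt_iff_isAltOffset w).2 hw.isAltOffset

lemma IsFreeAltPath.hasAltPathOfLength {f x : W} {w : G.Walk f x} (hw : IsFreeAltPath M w) :
    HasAltPathOfLength M x w.length :=
  ⟨f, w, hw, rfl⟩

lemma evenlevel_le {x : W} {n : ℕ} (h : HasAltPathOfLength M x n) (hn : Even n) :
    evenlevel G M x ≤ n := by
  obtain ⟨f, w, hw, rfl⟩ := h
  exact sInf_le ⟨f, w, hw.start_notMem, hw.isPath, hw.isAlt, hn, rfl⟩

lemma oddlevel_le {x : W} {n : ℕ} (h : HasAltPathOfLength M x n) (hn : Odd n) :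
    oddlevel G M x ≤ n := by
  obtain ⟨f, w, hw, rfl⟩ := h
  exact sInf_le ⟨f, w, hw.start_notMem, hw.isPath, hw.isAlt, hn, rfl⟩

lemma mem_of_sInf_eq_natCast {S : Set ℕ∞} {n : ℕ} (h : sInf S = n) : (n : ℕ∞) ∈ S :=
  h ▸ csInf_mem (Set.nonempty_iff_ne_empty.2 fun hS => by simp [hS] at h)

lemma hasAltPathOfLength_of_evenlevel_eq {x : W} {n : ℕ} (h : evenlevel G M x = n) :
    HasAltPathOfLength M x n ∧ Even n := by
  obtain ⟨f, w, hf, hw, halt, heven, hlen⟩ := mem_of_sInf_eq_natCast h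
  obtain rfl : w.length = n := by exact_mod_cast hlen.symm
  exact ⟨⟨f, w, ⟨hf, hw, (isAlt_iff_isAltOffset w).1 halt⟩, rfl⟩, heven⟩

lemma hasAltPathOfLength_of_oddlevel_eq {x : W} {n : ℕ} (h : oddlevel G M x = n) :
    HasAltPathOfLength M x n ∧ Odd n := by
  obtain ⟨f, w, hf, hw, halt, hodd, hlen⟩ := mem_of_sInf_eq_natCast h
  obtain rfl : w.length = n := by exact_mod_cast hlen.symm
  exact ⟨⟨f, w, ⟨hf, hw, (isAlt_iff_isAltOffset w).1 halt⟩, rfl⟩, hodd⟩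

lemma tenacity_le {x : W} {n₁ n₂ : ℕ} (h₁ : HasAltPathOfLength M x n₁)
    (h₂ : HasAltPathOfLength M x n₂) (hpar : n₁ % 2 ≠ n₂ % 2) :
    tenacity G M x ≤ (n₁ + n₂ : ℕ) := by
  rcases Nat.even_or_odd n₁ with hn₁ | hn₁
  · have hn₂ : Odd n₂ := Nat.odd_iff.2 (by rw [Nat.even_iff] at hn₁; omega)
    push_cast
    exact add_le_add (evenlevel_le h₁ hn₁) (oddlevel_le h₂ hn₂)
  · have hn₂ : Even n₂ := Nat.even_iff.2 (by rw [Nat.odd_iff] at hn₁; omega)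
    rw [add_comm, tenacity]
    push_cast
    exact add_le_add (evenlevel_le h₂ hn₂) (oddlevel_le h₁ hn₁)

lemma exists_hasAltPathOfLength_of_tenacity_le {x : W} {T : ℕ} (h : tenacity G M x ≤ T) :
    ∃ m μ, m + μ ≤ T ∧ Even m ∧ Odd μ ∧
      HasAltPathOfLength M x m ∧ HasAltPathOfLength M x μ := by
  obtain ⟨s, hs, hsT⟩ := ENat.le_natCast_iff.1 h
  have hsum : evenlevel G M x + oddlevel G M x ≠ ⊤ := by
    rw [← tenacity, hs]; exact ENat.natCast_ne_top s
  obtain ⟨m, hm⟩ := ENat.ne_top_iff_exists.1 (WithTop.add_ne_top.1 hsum).1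
  obtain ⟨μ, hμ⟩ := ENat.ne_top_iff_exists.1 (WithTop.add_ne_top.1 hsum).2
  obtain ⟨hmp, hme⟩ := hasAltPathOfLength_of_evenlevel_eq hm.symm
  obtain ⟨hμp, hμo⟩ := hasAltPathOfLength_of_oddlevel_eq hμ.symm
  refine ⟨m, μ, ?_, hme, hμo, hmp, hμp⟩
  have : ((m + μ : ℕ) : ℕ∞) = s := by rw [Nat.cast_add, hm, hμ]; exact hs
  have : m + μ = s := by exact_mod_cast this
  omega

end Levels

section MinPaths

variable {W : Type*} {G : SimpleGraph W} {M : G.Subgraph} {v f f' : W} {u : G.Walk f v}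
  {u' : G.Walk f' v}

lemma IsMinPathTo.isPath (hu : IsMinPathTo G M v f u) : u.IsPath :=
  hu.2.1

lemma IsMinPathTo.isFreeAltPath (hu : IsMinPathTo G M v f u) : IsFreeAltPath M u :=
  ⟨hu.1, hu.isPath, (isAlt_iff_isAltOffset u).1 hu.2.2.1⟩

lemma IsMinPathTo.le_of_hasAltPathOfLength (hu : IsMinPathTo G M v f u) {n : ℕ}
    (h : HasAltPathOfLength M v n) (hn : n % 2 = u.length % 2) : u.length ≤ n := by
  rcases hu.2.2.2 with ⟨hev, hlen⟩ | ⟨hodd, hlen⟩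
  · have := hlen ▸ evenlevel_le h (Nat.even_iff.2 (by rw [Nat.even_iff] at hev; omega))
    exact_mod_cast this
  · have := hlen ▸ oddlevel_le h (Nat.odd_iff.2 (by rw [Nat.odd_iff] at hodd; omega))
    exact_mod_cast this

lemma IsMinPathTo.tenacity_eq (hu : IsMinPathTo G M v f u) (hu' : IsMinPathTo G M v f' u')
    (hpar : u.length % 2 ≠ u'.length % 2) : tenacity G M v = (u.length + u'.length : ℕ) := by
  rw [tenacity, Nat.cast_add]
  rcases hu.2.2.2 with ⟨hev, hlen⟩ | ⟨hodd, hlen⟩ <;>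
    rcases hu'.2.2.2 with ⟨hev', hlen'⟩ | ⟨hodd', hlen'⟩
  · rw [Nat.even_iff] at hev hev'; omega
  · rw [hlen, hlen']
  · rw [hlen, hlen', add_comm]
  · rw [Nat.odd_iff] at hodd hodd'; omega

lemma IsMinPathTo.length_add_length_lt (hu : IsMinPathTo G M v f u)
    (hu' : IsMinPathTo G M v f' u') (hpar : u.length % 2 ≠ u'.length % 2) {x : W}
    (hvx : tenacity G M v < tenacity G M x) {n₁ n₂ : ℕ} (h₁ : HasAltPathOfLength M x n₁)
    (h₂ : HasAltPathOfLength M x n₂) (hn : n₁ % 2 ≠ n₂ % 2) :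
    u.length + u'.length < n₁ + n₂ := by
  have := (hu.tenacity_eq hu' hpar ▸ hvx).trans_le (tenacity_le h₁ h₂ hn)
  exact_mod_cast this

lemma exists_isMinPathTo_mod_two_ne (hv : tenacity G M v ≠ ⊤) (k : ℕ) :
    ∃ (f' : W) (u' : G.Walk f' v), IsMinPathTo G M v f' u' ∧ k % 2 ≠ u'.length % 2 := by
  obtain ⟨hev, hodd⟩ := WithTop.add_ne_top.1 hv
  rcases Nat.even_or_odd k with hk | hk
  · obtain ⟨μ, hμ⟩ := ENat.ne_top_iff_exists.1 hodd
    obtain ⟨⟨f', u', hu', rfl⟩, hμo⟩ := hasAltPathOfLength_of_oddlevel_eq hμ.symm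
    refine ⟨f', u', ⟨hu'.start_notMem, hu'.isPath, hu'.isAlt, .inr ⟨hμo, hμ⟩⟩, ?_⟩
    rw [Nat.even_iff] at hk; rw [Nat.odd_iff] at hμo; omega
  · obtain ⟨m, hm⟩ := ENat.ne_top_iff_exists.1 hev
    obtain ⟨⟨f', u', hu', rfl⟩, hme⟩ := hasAltPathOfLength_of_evenlevel_eq hm.symm
    refine ⟨f', u', ⟨hu'.start_notMem, hu'.isPath, hu'.isAlt, .inl ⟨hme, hm⟩⟩, ?_⟩
    rw [Nat.odd_iff] at hk; rw [Nat.even_iff] at hme; omega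

end MinPaths

section Splicing

variable {G : SimpleGraph V} {M : G.Subgraph}

lemma IsAltOffset.takeUntil {x y z : V} {w : G.Walk x y} {k : ℕ} (h : IsAltOffset M w k)
    (hz : z ∈ w.support) : IsAltOffset M (w.takeUntil z hz) k := by
  rw [← w.take_spec hz, isAltOffset_append_iff] at h
  exact h.1

lemma IsAltOffset.dropUntil {x y z : V} {w : G.Walk x y} {k : ℕ} (h : IsAltOffset M w k)
    (hz : z ∈ w.support) : IsAltOffset M (w.dropUntil z hz) (k + (w.takeUntil z hz).length) := by
  rw [← w.take_spec hz, isAltOffset_append_iff] at h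
  exact h.2

lemma IsFreeAltPath.takeUntil {f x z : V} {w : G.Walk f x} (hw : IsFreeAltPath M w)
    (hz : z ∈ w.support) : IsFreeAltPath M (w.takeUntil z hz) :=
  ⟨hw.start_notMem, hw.isPath.takeUntil hz, hw.isAltOffset.takeUntil hz⟩

/-- `a` and `j` are the positions on `r` and on `s` of the first vertex of `r` on `s`; from there
the new path continues along `s` forwards or backwards, whichever keeps the alternation. -/
lemma IsFreeAltPath.splice {f c x y : V} {r : G.Walk f c} (hr : IsFreeAltPath M r)
    {s : G.Walk x y} (hs : s.IsPath) {k : ℕ} (hsalt : IsAltOffset M s k) (hc : c ∈ s.support) :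
    ∃ a ≤ r.length, ∃ j ≤ s.length,
      (a % 2 = (k + j) % 2 ∧ HasAltPathOfLength M y (a + (s.length - j))) ∨
      (a % 2 ≠ (k + j) % 2 ∧ HasAltPathOfLength M x (a + j)) := by
  obtain ⟨z, hzr, hzs, hfirst⟩ := r.exists_first_mem (S := {w | w ∈ s.support}) hc
  have hr₁ := hr.takeUntil hzr
  refine ⟨_, r.length_takeUntil_le_length hzr, _, s.length_takeUntil_le_length hzs, ?_⟩
  by_cases hpar : (r.takeUntil z hzr).length % 2 = (k + (s.takeUntil z hzs).length) % 2
  · refine Or.inl ⟨hpar, f, (r.takeUntil z hzr).append (s.dropUntil z hzs),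
      ⟨hr.start_notMem, ?_, ?_⟩, ?_⟩
    · exact isPath_append hr₁.isPath (hs.dropUntil hzs) fun w hw hw' =>
        hfirst w hw (s.support_dropUntil_subset_support hzs hw')
    · exact (isAltOffset_append_iff _ _ 0).2
        ⟨hr₁.isAltOffset, (hsalt.dropUntil hzs).of_mod_two_eq (by omega)⟩
    · have := s.length_takeUntil_add_length_dropUntil hzs
      rw [length_append]
      omega
  · refine Or.inr ⟨hpar, f, (r.takeUntil z hzr).append (s.takeUntil z hzs).reverse,
      ⟨hr.start_notMem, ?_, ?_⟩, by rw [length_append, length_reverse]⟩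
    · exact isPath_append hr₁.isPath (hs.takeUntil hzs).reverse fun w hw hw' =>
        hfirst w hw (s.support_takeUntil_subset_support hzs (by simpa using hw'))
    · exact (isAltOffset_append_iff _ _ 0).2
        ⟨hr₁.isAltOffset, (hsalt.takeUntil hzs).reverse (by omega)⟩

lemma IsFreeAltPath.le_or_hasAltPathOfLength {f c b v : V} {r : G.Walk f c}
    (hr : IsFreeAltPath M r) {s : G.Walk b v} (hs : s.IsPath) {k : ℕ} (hsalt : IsAltOffset M s k)
    (hc : c ∈ s.support) {L : ℕ}
    (hL : ∀ n, HasAltPathOfLength M v n → n % 2 = (k + s.length) % 2 → L ≤ n) :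
    L ≤ r.length + s.length ∨
      ∃ n ≤ r.length + s.length, n % 2 ≠ k % 2 ∧ HasAltPathOfLength M b n := by
  obtain ⟨a, ha, j, hj, ⟨hpar, h⟩ | ⟨hpar, h⟩⟩ := hr.splice hs hsalt hc
  · exact Or.inl ((hL _ h (by omega)).trans (by omega))
  · exact Or.inr ⟨a + j, by omega, by omega, h⟩

/-- In an odd alternating path to the mate `b'` of `b`, the vertex `b` can only occur at an even
position, since an odd position would be followed by the matched edge to `b'`. -/
lemma exists_even_hasAltPathOfLength_of_adj (hM : M.IsMatching) {b b' f : V}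
    (hbb' : M.Adj b b') {ρ : G.Walk f b'} (hρ : IsFreeAltPath M ρ) (hodd : Odd ρ.length) :
    ∃ n ≤ ρ.length + 1, Even n ∧ HasAltPathOfLength M b n := by
  by_cases hb : b ∈ ρ.support
  · refine ⟨_, (ρ.length_takeUntil_le_length hb).trans (Nat.le_succ _), ?_,
      (hρ.takeUntil hb).hasAltPathOfLength⟩
    by_contra hg
    rw [Nat.not_even_iff_odd] at hg
    have halt := hρ.isAltOffset.dropUntil hb
    have hlen := ρ.length_takeUntil_add_length_dropUntil hb
    have hpath := hρ.isPath.dropUntil hb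
    generalize ρ.dropUntil b hb = q at halt hlen hpath
    cases q with
    | nil => exact hbb'.ne rfl
    | cons h p =>
      obtain ⟨hm, -⟩ := (isAltOffset_cons_iff _ _ _).1 halt
      obtain rfl := hM.eq_of_adj_left hbb' (Subgraph.mem_edgeSet.1 (hm.2 (by simpa using hg)))
      have hp : p.length = 0 :=
        length_eq_zero_iff.2 (isPath_iff_nil.1 ((cons_isPath_iff _ _).1 hpath).1)
      rw [length_cons, hp] at hlen
      rw [Nat.odd_iff] at hg hodd
      omega
  · refine ⟨ρ.length + 1, le_rfl, hodd.add_one, f, ρ.concat (M.adj_sub hbb'.symm),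
      ⟨hρ.start_notMem, hρ.isPath.concat hb _, ?_⟩, ρ.length_concat _⟩
    rw [concat_eq_append, isAltOffset_append_iff, isAltOffset_cons_iff]
    exact ⟨hρ.isAltOffset, iff_of_true (Subgraph.mem_edgeSet.2 hbb'.symm) (by simpa using hodd),
      isAltOffset_nil _⟩

end Splicing

section Base

variable {G : SimpleGraph V} {M : G.Subgraph} {v b f f' : V} {u : G.Walk f v}
  {u' : G.Walk f' v}

lemma IsBase.tenacity_le_of_mem_dropUntil (hbase : IsBase G M v b) (hu : IsMinPathTo G M v f u)
    (hb : b ∈ u.support) {y : V} (hy : y ∈ (u.dropUntil b hb).support) (hyb : y ≠ b) :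
    tenacity G M y ≤ tenacity G M v := by
  obtain ⟨_, -, hfar⟩ := hbase f u hu
  by_contra! h
  exact (hfar y _ h).not_gt (length_takeUntil_lt_of_mem_dropUntil hu.isPath hb hy hyb)

lemma mod_two_length_takeUntil_eq (hvb : tenacity G M v < tenacity G M b)
    (hu : IsMinPathTo G M v f u) (hu' : IsMinPathTo G M v f' u')
    (hpar : u.length % 2 ≠ u'.length % 2) (hb : b ∈ u.support) (hb' : b ∈ u'.support) :
    (u.takeUntil b hb).length % 2 = (u'.takeUntil b hb').length % 2 := by
  by_contra h
  have := hu.length_add_length_lt hu' hpar hvb (hu.isFreeAltPath.takeUntil hb).hasAltPathOfLength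
    (hu'.isFreeAltPath.takeUntil hb').hasAltPathOfLength h
  have := u.length_takeUntil_le_length hb
  have := u'.length_takeUntil_le_length hb'
  omega

lemma even_length_takeUntil_of_length_le (hM : M.IsMatching) (hbase : IsBase G M v b)
    (hu : IsMinPathTo G M v f u) (hu' : IsMinPathTo G M v f' u')
    (hpar : u.length % 2 ≠ u'.length % 2) (hle : u.length ≤ u'.length) (hb : b ∈ u.support) :
    Even (u.takeUntil b hb).length := by
  obtain ⟨-, hvb, -⟩ := hbase f u hu
  by_contra hℓ
  rw [Nat.not_even_iff_odd] at hℓ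
  have hsplit := u.length_takeUntil_add_length_dropUntil hb
  have hQalt : IsAltOffset M (u.dropUntil b hb) (u.takeUntil b hb).length := by
    simpa using hu.isFreeAltPath.isAltOffset.dropUntil hb
  obtain ⟨b', hbb', hb'Q⟩ : ∃ b', M.Adj b b' ∧ b' ∈ (u.dropUntil b hb).support := by
    have hQ := hQalt
    generalize u.dropUntil b hb = Q at hQ
    cases Q with
    | nil => exact absurd hvb (lt_irrefl _)
    | cons h p =>
      exact ⟨_, Subgraph.mem_edgeSet.1 (((isAltOffset_cons_iff _ _ _).1 hQ).1.2 hℓ), by simp⟩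
  have hb'T := (hbase.tenacity_le_of_mem_dropUntil hu hb hb'Q (M.adj_sub hbb').ne.symm).trans_eq
    (hu.tenacity_eq hu' hpar)
  obtain ⟨m, μ, hmμ, hm, hμ, ⟨fR, R, hR, rfl⟩, ⟨fρ, ρ, hρ, rfl⟩⟩ :=
    exists_hasAltPathOfLength_of_tenacity_le hb'T
  obtain ⟨n₀, hn₀, hn₀e, hbn₀⟩ := exists_even_hasAltPathOfLength_of_adj hM hbb' hρ hμ
  have hℓb := (hu.isFreeAltPath.takeUntil hb).hasAltPathOfLength
  rw [Nat.odd_iff] at hℓ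
  rw [Nat.even_iff] at hm hn₀e
  have h₀ := hu.length_add_length_lt hu' hpar hvb hbn₀ hℓb (by omega)
  rcases hR.le_or_hasAltPathOfLength (hu.isPath.dropUntil hb) hQalt hb'Q (L := u.length)
    (fun n hn _ => hu.le_of_hasAltPathOfLength hn (by omega)) with h | ⟨n, hn, hnpar, hbn⟩
  · omega
  · have := hu.length_add_length_lt hu' hpar hvb hbn hℓb (by omega)
    omega

lemma even_length_takeUntil (hM : M.IsMatching) (hbase : IsBase G M v b)
    (hu : IsMinPathTo G M v f u) (hu' : IsMinPathTo G M v f' u')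
    (hpar : u.length % 2 ≠ u'.length % 2) (hb : b ∈ u.support) :
    Even (u.takeUntil b hb).length := by
  rcases le_total u.length u'.length with hle | hle
  · exact even_length_takeUntil_of_length_le hM hbase hu hu' hpar hle hb
  · obtain ⟨hb', hvb, -⟩ := hbase f' u' hu'
    have := even_length_takeUntil_of_length_le hM hbase hu' hu hpar.symm hle hb'
    rw [Nat.even_iff] at this ⊢
    rw [mod_two_length_takeUntil_eq hvb hu hu' hpar hb hb', this]

lemma evenlevel_eq_length_takeUntil (hM : M.IsMatching) (hbase : IsBase G M v b)
    (hu : IsMinPathTo G M v f u) (hu' : IsMinPathTo G M v f' u')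
    (hpar : u.length % 2 ≠ u'.length % 2) (hb : b ∈ u.support) :
    evenlevel G M b = (u.takeUntil b hb).length := by
  obtain ⟨hb', hvb, -⟩ := hbase f' u' hu'
  have hΛ := even_length_takeUntil hM hbase hu hu' hpar hb
  have hle' := evenlevel_le (hu'.isFreeAltPath.takeUntil hb').hasAltPathOfLength
    (even_length_takeUntil hM hbase hu' hu hpar.symm hb')
  refine le_antisymm (evenlevel_le (hu.isFreeAltPath.takeUntil hb).hasAltPathOfLength hΛ)
    (not_lt.1 fun hlt => ?_)
  obtain ⟨m, hm⟩ := ENat.ne_top_iff_exists.1 (hlt.trans_le le_top).ne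
  obtain ⟨⟨fR, R, hR, rfl⟩, hme⟩ := hasAltPathOfLength_of_evenlevel_eq hm.symm
  rw [← hm, Nat.cast_lt] at hlt
  rw [← hm, Nat.cast_le] at hle'
  have hsplit := u.length_takeUntil_add_length_dropUntil hb
  have := u'.length_takeUntil_le_length hb'
  rw [Nat.even_iff] at hΛ hme
  rcases hR.le_or_hasAltPathOfLength (hu.isPath.dropUntil hb)
    (by simpa using hu.isFreeAltPath.isAltOffset.dropUntil hb) (u.dropUntil b hb).start_mem_support
    (L := u.length) (fun n hn _ => hu.le_of_hasAltPathOfLength hn (by omega))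
    with h | ⟨n, hn, hnpar, hbn⟩
  · omega
  · have := hu.length_add_length_lt hu' hpar hvb hR.hasAltPathOfLength hbn (by omega)
    omega

lemma length_dropUntil_le (hM : M.IsMatching) (hbase : IsBase G M v b)
    (hu : IsMinPathTo G M v f u) (hu' : IsMinPathTo G M v f' u')
    (hpar : u.length % 2 ≠ u'.length % 2) (hb : b ∈ u.support) {s : G.Walk b v}
    (hs : s.IsPath) (hsalt : IsAltOffset M s 0) (hspar : s.length % 2 = u.length % 2) :
    (u.dropUntil b hb).length ≤ s.length := by
  obtain ⟨hb', hvb, -⟩ := hbase f' u' hu'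
  have hΛ := even_length_takeUntil hM hbase hu hu' hpar hb
  have hΛΛ' : (u.takeUntil b hb).length = (u'.takeUntil b hb').length := by
    exact_mod_cast (evenlevel_eq_length_takeUntil hM hbase hu hu' hpar hb).symm.trans
      (evenlevel_eq_length_takeUntil hM hbase hu' hu hpar.symm hb')
  have hsplit := u.length_takeUntil_add_length_dropUntil hb
  have := u'.length_takeUntil_le_length hb'
  rw [Nat.even_iff] at hΛ
  rcases (hu.isFreeAltPath.takeUntil hb).le_or_hasAltPathOfLength hs hsalt s.start_mem_support
    (L := u.length) (fun n hn _ => hu.le_of_hasAltPathOfLength hn (by omega))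
    with h | ⟨n, hn, hnpar, hbn⟩
  · omega
  · have := hu.length_add_length_lt hu' hpar hvb (hu.isFreeAltPath.takeUntil hb).hasAltPathOfLength
      hbn (by omega)
    omega

lemma sInf_length_eq_length_dropUntil (hM : M.IsMatching) (hbase : IsBase G M v b)
    (hu : IsMinPathTo G M v f u) (hu' : IsMinPathTo G M v f' u')
    (hpar : u.length % 2 ≠ u'.length % 2) (hb : b ∈ u.support) {P : ℕ → Prop}
    (hP : ∀ n, P n ↔ n % 2 = u.length % 2) :
    sInf {n : ℕ∞ | ∃ s : G.Walk b v, s.IsPath ∧ IsAlt G M s ∧ P s.length ∧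
      n = s.length} = (u.dropUntil b hb).length := by
  have hΛ := Nat.even_iff.1 (even_length_takeUntil hM hbase hu hu' hpar hb)
  have hsplit := u.length_takeUntil_add_length_dropUntil hb
  refine le_antisymm (sInf_le ⟨_, hu.isPath.dropUntil hb, (isAlt_iff_isAltOffset _).2 ?_,
    (hP _).2 (by omega), rfl⟩) (le_sInf ?_)
  · exact (hu.isFreeAltPath.isAltOffset.dropUntil hb).of_mod_two_eq (by omega)
  · rintro _ ⟨s, hs, hsalt, hsP, rfl⟩
    exact_mod_cast length_dropUntil_le hM hbase hu hu' hpar hb hs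
      ((isAlt_iff_isAltOffset s).1 hsalt) ((hP _).1 hsP)

end Base

theorem stmt6_general (G : SimpleGraph V) (M : G.Subgraph) (hM : M.IsMatching)
    (v b : V) (hbase : IsBase G M v b) :
    ∀ (f : V) (w : G.Walk f v), IsMinPathTo G M v f w →
      ∃ hbw : b ∈ w.support,
        ((w.takeUntil b hbw).length : ℕ∞) = evenlevel G M b ∧
        (Even w.length → ((w.dropUntil b hbw).length : ℕ∞) = evenlevelFrom G M b v) ∧
        (Odd w.length → ((w.dropUntil b hbw).length : ℕ∞) = oddlevelFrom G M b v) := by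
  intro f w hw
  obtain ⟨hb, hvb, -⟩ := hbase f w hw
  obtain ⟨f', w', hw', hpar⟩ := exists_isMinPathTo_mod_two_ne (ne_top_of_lt hvb) w.length
  refine ⟨hb, (evenlevel_eq_length_takeUntil hM hbase hw hw' hpar hb).symm,
    fun heven => ?_, fun hodd => ?_⟩
  · exact (sInf_length_eq_length_dropUntil hM hbase hw hw' hpar hb fun n => by
      rw [Nat.even_iff, Nat.even_iff.1 heven]).symm
  · exact (sInf_length_eq_length_dropUntil hM hbase hw hw' hpar hb fun n => by
      rw [Nat.odd_iff, Nat.odd_iff.1 hodd]).symm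

/-- Every `evenlevel(v)` (resp. `oddlevel(v)`) path is an `evenlevel(b)` path concatenated
with an `evenlevel(b; v)` (resp. `oddlevel(b; v)`) path, where `b = base(v)`. -/
theorem stmt6 (G : SimpleGraph V) (M : G.Subgraph) (hM : M.IsMatching)
    (v b : V) (t : ℕ∞) (ht : tenacity G M v = t) (hlt : t < lm G M)
    (hbase : IsBase G M v b) :
    ∀ (f : V) (w : G.Walk f v), IsMinPathTo G M v f w →
      ∃ hbw : b ∈ w.support,
        ((w.takeUntil b hbw).length : ℕ∞) = evenlevel G M b ∧
        (Even w.length → ((w.dropUntil b hbw).length : ℕ∞) = evenlevelFrom G M b v) ∧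
        (Odd w.length → ((w.dropUntil b hbw).length : ℕ∞) = oddlevelFrom G M b v) :=
  stmt6_general G M hM v b hbase

end MV
end

section
/- Within any blossom B_{b,t}, for every vertex v in B_{b,t} there exists k with 1 ≤ k ≤ N(B_{b,t}) such that b = base^k(v), and all of base(v), base^2(v), ..., base^{k-1}(v) belong to B_{b,t}. -/
attribute [local instance] Classical.propDecidable

variable {V : Type*} [DecidableEq V]

namespace MV

/-!
Induction on `t` along the recursive definition of `B_{b,t}`. A vertex of `S_{b,t}` has base `b`,
so `k = 1`. A vertex of `B_{u,t-2}` with `u = b` inherits its exponent from the inductive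
hypothesis; with `u ∈ S_{b,t}` one further application of `base` takes `u` to `b`, and the
nesting depth grows by one exactly in that situation.
-/

section

omit [DecidableEq V]

variable (G : SimpleGraph V) (M : G.Subgraph) (bse : V → V)

/-- The set `S_{b,t}`. -/
def baseClass (t : ℕ) (b : V) : Set V :=
  {v | tenacity G M v = (t : ℕ∞) ∧ bse v = b}

/-- The outer vertices of `S_{b,t} ∪ {b}`, whose blossoms `B_{u,t-2}` make up `B_{b,t}`. -/
def childBases (t : ℕ) (b : V) : Set V :=
  {u | (u = b ∨ u ∈ baseClass G M bse t b) ∧ Outer G M u}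

theorem blossom_add_two (t : ℕ) (b : V) :
    blossom G M bse (t + 2) b =
      baseClass G M bse (t + 2) b ∪ ⋃ u ∈ childBases G M bse (t + 2) b, blossom G M bse t u := by
  rw [blossom]; rfl

theorem nestDepth_add_two (t : ℕ) (b : V) :
    nestDepth G M bse (t + 2) b =
      if (baseClass G M bse (t + 2) b).Nonempty then
        1 + sSup (nestDepth G M bse t '' childBases G M bse (t + 2) b)
      else nestDepth G M bse t b := by
  rw [nestDepth]; rfl

theorem nestDepth_le (t : ℕ) (b : V) : nestDepth G M bse t b ≤ t := by
  induction t using Nat.strong_induction_on generalizing b with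
  | _ t ih =>
    match t with
    | 0 | 1 => simp [nestDepth]
    | n + 2 =>
      rw [nestDepth_add_two]
      split
      · have : sSup (nestDepth G M bse n '' childBases G M bse (n + 2) b) ≤ n :=
          csSup_le' (by rintro _ ⟨u, -, rfl⟩; exact ih n (by omega) u)
        omega
      · exact (ih n (by omega) b).trans (by omega)

-- `V` may be infinite, and `sSup` of an unbounded subset of `ℕ` is `0`: the bound comes from
-- `nestDepth_le`.
theorem nestDepth_le_sSup_childBases {t : ℕ} {b u : V} (hu : u ∈ childBases G M bse (t + 2) b) :
    nestDepth G M bse t u ≤ sSup (nestDepth G M bse t '' childBases G M bse (t + 2) b) :=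
  le_csSup ⟨t, by rintro _ ⟨x, -, rfl⟩; exact nestDepth_le G M bse t x⟩ ⟨u, hu, rfl⟩

theorem nestDepth_le_nestDepth_add_two {t : ℕ} {b : V} (hb : Outer G M b) :
    nestDepth G M bse t b ≤ nestDepth G M bse (t + 2) b := by
  have := nestDepth_le_sSup_childBases G M bse (t := t) (b := b) ⟨Or.inl rfl, hb⟩
  rw [nestDepth_add_two]
  split <;> omega

theorem nestDepth_lt_nestDepth_add_two {t : ℕ} {b u : V} (hu : u ∈ baseClass G M bse (t + 2) b)
    (hu' : Outer G M u) : nestDepth G M bse t u < nestDepth G M bse (t + 2) b := by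
  have := nestDepth_le_sSup_childBases G M bse (t := t) (b := b) ⟨Or.inr hu, hu'⟩
  rw [nestDepth_add_two, if_pos ⟨u, hu⟩]
  omega

theorem blossom_subset_blossom_add_two {t : ℕ} {b u : V} (hu : u ∈ childBases G M bse (t + 2) b) :
    blossom G M bse t u ⊆ blossom G M bse (t + 2) b := by
  rw [blossom_add_two]
  exact Set.subset_union_of_subset_right (Set.subset_biUnion_of_mem hu) _

theorem exists_iterate_eq_of_mem_blossom (t : ℕ) {b v : V} (hv : v ∈ blossom G M bse t b) :
    ∃ k, 1 ≤ k ∧ k ≤ nestDepth G M bse t b ∧ bse^[k] v = b ∧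
      ∀ j, 1 ≤ j → j < k → bse^[j] v ∈ blossom G M bse t b := by
  induction t using Nat.strong_induction_on generalizing b v with
  | _ t ih =>
    match t with
    | 0 | 1 => simp [blossom] at hv
    | n + 2 =>
      rw [blossom_add_two] at hv
      obtain hvS | hv := hv
      · refine ⟨1, le_rfl, ?_, hvS.2, fun j hj hj' => by omega⟩
        rw [nestDepth_add_two, if_pos ⟨v, hvS⟩]
        omega
      obtain ⟨u, hu, hvu⟩ := Set.mem_iUnion₂.1 hv
      obtain ⟨k, hk, hkN, hkv, hmem⟩ := ih n (by omega) hvu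
      have hsub := blossom_subset_blossom_add_two G M bse hu
      obtain ⟨rfl | huS, hu'⟩ := hu
      · exact ⟨k, hk, hkN.trans (nestDepth_le_nestDepth_add_two G M bse hu'), hkv,
          fun j hj hjk => hsub (hmem j hj hjk)⟩
      · have hN := nestDepth_lt_nestDepth_add_two G M bse huS hu'
        refine ⟨k + 1, by omega, by omega, ?_, fun j hj hjk => ?_⟩
        · rw [Function.iterate_succ_apply', hkv, huS.2]
        · obtain hjk | rfl := (Nat.lt_succ_iff.1 hjk).lt_or_eq
          · exact hsub (hmem j hj hjk)
          · rw [hkv, blossom_add_two]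
            exact Or.inl huS

end

theorem stmt7_general (G : SimpleGraph V) (M : G.Subgraph)
    (bse : V → V)
    (b : V) (t : ℕ)
    (v : V) (hv : v ∈ blossom G M bse t b) :
    ∃ k, 1 ≤ k ∧ k ≤ nestDepth G M bse t b ∧ bse^[k] v = b ∧
      ∀ j, 1 ≤ j → j < k → bse^[j] v ∈ blossom G M bse t b :=
  exists_iterate_eq_of_mem_blossom G M bse t hv

/-- For every `v ∈ B_{b,t}` there is `k` with `1 ≤ k ≤ N(B_{b,t})` such that
`b = base^k(v)`, and `base(v), …, base^{k-1}(v)` all belong to `B_{b,t}`. -/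
theorem stmt7 (G : SimpleGraph V) (M : G.Subgraph) (hM : M.IsMatching)
    (bse : V → V) (hbse : BaseFn G M bse)
    (b : V) (t : ℕ) (hodd : Odd t) (hb : Outer G M b)
    (htb : (t : ℕ∞) < tenacity G M b) (hlm : (t : ℕ∞) < lm G M)
    (v : V) (hv : v ∈ blossom G M bse t b) :
    ∃ k, 1 ≤ k ∧ k ≤ nestDepth G M bse t b ∧ bse^[k] v = b ∧
      ∀ j, 1 ≤ j → j < k → bse^[j] v ∈ blossom G M bse t b :=
  stmt7_general G M bse b t v hv

end MV
end

section
/- If t ≤ t' < tenacity(b) and t' < l_m, then the blossom B_{b,t} is contained in the blossom B_{b,t'}. -/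
attribute [local instance] Classical.propDecidable

variable {V : Type*} [DecidableEq V]

namespace MV

lemma blossom_step (G : SimpleGraph V) (M : G.Subgraph) (bse : V → V) (b : V) (t : ℕ)
    (hb : Outer G M b) : blossom G M bse t b ⊆ blossom G M bse (t + 2) b := by
  intro x hx
  show x ∈ blossom G M bse (t + 2) b
  rw [blossom]
  right
  exact Set.mem_biUnion ⟨Or.inl rfl, hb⟩ hx

/-- If `t ≤ t' < tenacity(b)` and `t' < l_m` then `B_{b,t} ⊆ B_{b,t'}`. -/
theorem stmt8 (G : SimpleGraph V) (M : G.Subgraph) (hM : M.IsMatching)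
    (bse : V → V) (hbse : BaseFn G M bse)
    (b : V) (t t' : ℕ) (hodd : Odd t) (hodd' : Odd t') (hb : Outer G M b)
    (htt' : t ≤ t') (htb : (t' : ℕ∞) < tenacity G M b) (hlm : (t' : ℕ∞) < lm G M) :
    blossom G M bse t b ⊆ blossom G M bse t' b := by
  obtain ⟨k, hk⟩ : ∃ k, t' = t + 2 * k := by
    obtain ⟨m, hm⟩ := hodd; obtain ⟨m', hm'⟩ := hodd'
    exact ⟨m' - m, by omega⟩
  subst hk
  clear htt' htb hlm hodd hodd'
  induction k with
  | zero => simp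
  | succ n ih =>
    refine ih.trans ?_
    have : t + 2 * (n + 1) = (t + 2 * n) + 2 := by ring
    rw [this]
    exact blossom_step G M bse b (t + 2 * n) hb

end MV
end

section
/- The set of blossoms in G forms a laminar family: any two blossoms are either disjoint, or one contains the other. -/
attribute [local instance] Classical.propDecidable

variable {V : Type*} [DecidableEq V]

namespace MV

set_option linter.unusedSectionVars false

/-- A `bse`-iterate chain from `u` up to `b` witnessing membership in `blossom G M bse t b`. -/
def GoodChain (G : SimpleGraph V) (M : G.Subgraph) (bse : V → V) (t : ℕ) (b u : V) : Prop :=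
  ∃ k : ℕ, 0 < k ∧ bse^[k] u = b ∧
    (∀ i, 0 < i → i < k → Outer G M (bse^[i] u)) ∧
    ∃ n : ℕ → ℕ,
      (∀ i < k, tenacity G M (bse^[i] u) = (n i : ℕ∞) ∧ Odd (n i) ∧ 2 ≤ n i) ∧
      (∀ i, i + 1 < k → n i + 2 ≤ n (i + 1)) ∧ n (k - 1) ≤ t

lemma mem_blossom_iff (G : SimpleGraph V) (M : G.Subgraph) (bse : V → V) (t : ℕ) (b u : V) :
    u ∈ blossom G M bse (t + 2) b ↔
      (tenacity G M u = ((t + 2 : ℕ) : ℕ∞) ∧ bse u = b) ∨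
      ∃ v, (v = b ∨ (tenacity G M v = ((t + 2 : ℕ) : ℕ∞) ∧ bse v = b)) ∧ Outer G M v ∧
        u ∈ blossom G M bse t v := by
  simp only [blossom, Set.mem_union, Set.mem_setOf_eq, Set.mem_iUnion, exists_prop]
  constructor
  · rintro (h | ⟨v, ⟨hv1, hv2⟩, hv3⟩)
    · exact Or.inl h
    · exact Or.inr ⟨v, hv1, hv2, hv3⟩
  · rintro (h | ⟨v, hv1, hv2, hv3⟩)
    · exact Or.inl h
    · exact Or.inr ⟨v, ⟨hv1, hv2⟩, hv3⟩

lemma goodChain_mono {G : SimpleGraph V} {M : G.Subgraph} {bse : V → V} {t t' : ℕ} {b u : V}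
    (h : GoodChain G M bse t b u) (htt : t ≤ t') : GoodChain G M bse t' b u := by
  obtain ⟨k, hk, h1, h2, n, h3, h4, h5⟩ := h
  exact ⟨k, hk, h1, h2, n, h3, h4, h5.trans htt⟩

lemma blossom_goodChain {G : SimpleGraph V} {M : G.Subgraph} {bse : V → V} :
    ∀ t : ℕ, Odd t → ∀ b u, u ∈ blossom G M bse t b → GoodChain G M bse t b u := by
  intro t
  induction t using Nat.strong_induction_on with
  | _ t ih =>
    match t with
    | 0 => intro h; exact absurd h (by decide)
    | 1 => intro _ b u hu; simp [blossom] at hu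
    | (t + 2) =>
      intro hodd b u hu
      rw [mem_blossom_iff] at hu
      rcases hu with ⟨h1, h2⟩ | ⟨v, hv, hov, hu⟩
      · refine ⟨1, one_pos, by simpa using h2, fun i hi0 hi1 => absurd hi1 (by omega),
          fun _ => t + 2, ?_, fun i hi => absurd hi (by omega), le_refl _⟩
        intro i hi
        interval_cases i
        exact ⟨by simpa using h1, by simpa using hodd, Nat.le_add_left 2 t⟩
      · have hoddt : Odd t := by rcases hodd with ⟨j, hj⟩; exact ⟨j - 1, by omega⟩
        have hch : GoodChain G M bse t v u := ih t (by omega) hoddt v u hu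
        rcases hv with rfl | ⟨hv1, hv2⟩
        · exact goodChain_mono hch (by omega)
        · obtain ⟨k, hk, h1, h2, n, h3, h4, h5⟩ := hch
          refine ⟨k + 1, by omega, ?_, ?_, fun i => if i < k then n i else t + 2, ?_, ?_, ?_⟩
          · rw [Function.iterate_succ_apply', h1, hv2]
          · intro i hi0 hik
            rcases Nat.lt_or_ge i k with h | h
            · exact h2 i hi0 h
            · have : i = k := by omega
              subst this
              rw [h1]; exact hov
          · intro i hik
            simp only
            rcases Nat.lt_or_ge i k with h | h
            · rw [if_pos h]; exact h3 i h
            · have hik0 : i = k := by omega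
              rw [if_neg (by omega : ¬ i < k), hik0, h1]
              exact ⟨hv1, by simpa using hodd, Nat.le_add_left 2 t⟩
          · intro i hik
            simp only
            rcases Nat.lt_or_ge (i + 1) k with h | h
            · have hik' : i < k := by omega
              rw [if_pos hik', if_pos h]
              exact h4 i h
            · have hik' : i < k := by omega
              rw [if_pos hik', if_neg (by omega : ¬ i + 1 < k)]
              have hle : n i ≤ t := by rw [show i = k - 1 by omega]; exact h5
              omega
          · simp only [Nat.add_sub_cancel]
            rw [if_neg (lt_irrefl k)]

lemma goodChain_blossom {G : SimpleGraph V} {M : G.Subgraph} {bse : V → V} :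
    ∀ t : ℕ, Odd t → ∀ b u, Outer G M b → GoodChain G M bse t b u → u ∈ blossom G M bse t b := by
  intro t
  induction t using Nat.strong_induction_on with
  | _ t ih =>
    match t with
    | 0 => intro h; exact absurd h (by decide)
    | 1 =>
      intro _ b u _ ⟨k, hk, h1, h2, n, h3, h4, h5⟩
      have := h3 (k - 1) (by omega)
      omega
    | (t + 2) =>
      intro hodd b u hob ⟨k, hk, h1, h2, n, h3, h4, h5⟩
      have hoddt : Odd t := by rcases hodd with ⟨j, hj⟩; exact ⟨j - 1, by omega⟩
      rw [mem_blossom_iff]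
      rcases Nat.lt_or_ge (n (k - 1)) (t + 2) with hlt | hge
      · -- top tenacity < t + 2, so ≤ t by parity: descend with same base b
        have hodd1 : Odd (n (k - 1)) := (h3 (k - 1) (by omega)).2.1
        have hle : n (k - 1) ≤ t := by
          rcases hodd1 with ⟨a, ha⟩; rcases hodd with ⟨c, hc⟩; omega
        exact Or.inr ⟨b, Or.inl rfl, hob,
          ih t (by omega) hoddt b u hob ⟨k, hk, h1, h2, n, h3, h4, hle⟩⟩
      · have htop : n (k - 1) = t + 2 := by omega
        rcases Nat.eq_or_lt_of_le hk with hk1 | hk2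
        · -- k = 1 : direct member
          obtain rfl : k = 1 := hk1.symm
          norm_num at htop h1
          have h0 := h3 0 (by omega)
          simp only [Function.iterate_zero, id_eq] at h0
          left
          refine ⟨?_, h1⟩
          rw [h0.1, htop]
        · -- k ≥ 2 : peel off v = bse^[k-1] u
          set v := bse^[k - 1] u with hvdef
          have hvten : tenacity G M v = ((t + 2 : ℕ) : ℕ∞) := by
            have h' := (h3 (k - 1) (by omega)).1
            rw [hvdef, h', htop]
          have hvbse : bse v = b := by
            have h' : bse (bse^[k - 1] u) = bse^[k - 1 + 1] u :=
              (Function.iterate_succ_apply' bse (k - 1) u).symm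
            rw [show k - 1 + 1 = k by omega] at h'
            rw [hvdef, h', h1]
          have hov : Outer G M v := h2 (k - 1) (by omega) (by omega)
          refine Or.inr ⟨v, Or.inr ⟨hvten, hvbse⟩, hov, ?_⟩
          refine ih t (by omega) hoddt v u hov ⟨k - 1, by omega, rfl, ?_, n, ?_, ?_, ?_⟩
          · intro i hi0 hik
            exact h2 i hi0 (by omega)
          · intro i hik
            exact h3 i (by omega)
          · intro i hik
            exact h4 i (by omega)
          · have h' := h4 (k - 2) (by omega)
            rw [show k - 2 + 1 = k - 1 by omega] at h'
            rw [show k - 1 - 1 = k - 2 by omega]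
            omega

/-- Composing chains: if `b` has a good chain to `b'` and every element of a `t`-chain lies
strictly below `tenacity b`, chains to `b` extend to chains to `b'`. -/
lemma goodChain_comp {G : SimpleGraph V} {M : G.Subgraph} {bse : V → V} {t t' : ℕ} {b b' x : V}
    (hob : Outer G M b) (htb : (t : ℕ∞) < tenacity G M b)
    (hgb : GoodChain G M bse t' b' b) (hgx : GoodChain G M bse t b x) :
    GoodChain G M bse t' b' x := by
  obtain ⟨d, hd, g1, g2, q, g3, g4, g5⟩ := hgb
  obtain ⟨m, hm, p1, p2, p, p3, p4, p5⟩ := hgx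
  have key : ∀ j, bse^[m + j] x = bse^[j] b := by
    intro j
    rw [Nat.add_comm, Function.iterate_add_apply, p1]
  refine ⟨m + d, by omega, ?_, ?_, fun i => if i < m then p i else q (i - m), ?_, ?_, ?_⟩
  · rw [key d, g1]
  · intro i hi0 hik
    rcases Nat.lt_or_ge i m with h | h
    · exact p2 i hi0 h
    · rcases Nat.eq_or_lt_of_le h with h' | h'
      · rw [← h', p1]
        exact hob
      · rw [show i = m + (i - m) by omega, key (i - m)]
        exact g2 (i - m) (by omega) (by omega)
  · intro i hik
    simp only
    rcases Nat.lt_or_ge i m with h | h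
    · rw [if_pos h]
      exact p3 i h
    · rw [if_neg (by omega : ¬ i < m), show i = m + (i - m) by omega, key (i - m),
        show m + (i - m) - m = i - m by omega]
      exact g3 (i - m) (by omega)
  · intro i hik
    simp only
    rcases Nat.lt_or_ge (i + 1) m with h | h
    · have h' : i < m := by omega
      rw [if_pos h', if_pos h]
      exact p4 i h
    · rcases Nat.eq_or_lt_of_le h with h' | h'
      · -- junction: i + 1 = m
        have hi : i < m := by omega
        rw [if_pos hi, if_neg (by omega : ¬ i + 1 < m), show i + 1 - m = 0 by omega]
        have hq0 : tenacity G M b = (q 0 : ℕ∞) := by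
          have h0 := (g3 0 (by omega)).1
          simpa using h0
        have hlt : (t : ℕ) < q 0 := by
          have hcast : (t : ℕ∞) < (q 0 : ℕ∞) := hq0 ▸ htb
          exact_mod_cast hcast
        have hpodd : Odd (p i) := (p3 i hi).2.1
        have hqodd : Odd (q 0) := (g3 0 (by omega)).2.1
        have hpi : p i ≤ t := by
          have h5' := p5
          rw [show m - 1 = i by omega] at h5'
          exact h5'
        rcases hpodd with ⟨a, ha⟩
        rcases hqodd with ⟨c, hc⟩
        omega
      · rw [if_neg (by omega : ¬ i < m), if_neg (by omega : ¬ i + 1 < m)]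
        have h'' := g4 (i - m) (by omega)
        rw [show i - m + 1 = i + 1 - m by omega] at h''
        exact h''
  · simp only
    rw [if_neg (by omega : ¬ m + d - 1 < m), show m + d - 1 - m = d - 1 by omega]
    exact g5

/-- The set of blossoms forms a laminar family: any two blossoms are either disjoint
or one is contained in the other. -/
theorem stmt11 (G : SimpleGraph V) (M : G.Subgraph) (hM : M.IsMatching)
    (bse : V → V) (hbse : BaseFn G M bse)
    (b b' : V) (t t' : ℕ) (hodd : Odd t) (hodd' : Odd t')
    (hb : Outer G M b) (hb' : Outer G M b')
    (htb : (t : ℕ∞) < tenacity G M b) (hlm : (t : ℕ∞) < lm G M)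
    (htb' : (t' : ℕ∞) < tenacity G M b') (hlm' : (t' : ℕ∞) < lm G M) :
    Disjoint (blossom G M bse t b) (blossom G M bse t' b') ∨
    blossom G M bse t b ⊆ blossom G M bse t' b' ∨
    blossom G M bse t' b' ⊆ blossom G M bse t b := by
  by_cases hdis : Disjoint (blossom G M bse t b) (blossom G M bse t' b')
  · exact Or.inl hdis
  rw [Set.not_disjoint_iff] at hdis
  obtain ⟨u, hu, hu'⟩ := hdis
  obtain ⟨k, hk, h1, h2, n, h3, h4, h5⟩ := blossom_goodChain t hodd b u hu
  obtain ⟨k', hk', h1', h2', n', h3', h4', h5'⟩ := blossom_goodChain t' hodd' b' u hu'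
  rcases lt_trichotomy k k' with hkk | hkk | hkk
  · right; left
    intro x hx
    apply goodChain_blossom t' hodd' b' x hb'
    refine goodChain_comp hb htb ?_ (blossom_goodChain t hodd b x hx)
    refine ⟨k' - k, by omega, ?_, ?_, fun j => n' (j + k), ?_, ?_, ?_⟩
    · rw [← h1, ← Function.iterate_add_apply, show k' - k + k = k' by omega, h1']
    · intro j hj0 hjk
      rw [← h1, ← Function.iterate_add_apply]
      exact h2' (j + k) (by omega) (by omega)
    · intro j hj
      rw [← h1, ← Function.iterate_add_apply]
      exact h3' (j + k) (by omega)
    · intro j hj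
      have hj' := h4' (j + k) (by omega)
      rw [show j + k + 1 = j + 1 + k by omega] at hj'
      exact hj'
    · show n' (k' - k - 1 + k) ≤ t'
      rw [show k' - k - 1 + k = k' - 1 by omega]
      exact h5'
  · have hbb : b = b' := by rw [← h1, hkk, h1']
    subst hbb
    rcases le_total t t' with htt | htt
    · exact Or.inr (Or.inl fun x hx => goodChain_blossom t' hodd' b x hb
        (goodChain_mono (blossom_goodChain t hodd b x hx) htt))
    · exact Or.inr (Or.inr fun x hx => goodChain_blossom t hodd b x hb
        (goodChain_mono (blossom_goodChain t' hodd' b x hx) htt))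
  · right; right
    intro x hx
    apply goodChain_blossom t hodd b x hb
    refine goodChain_comp hb' htb' ?_ (blossom_goodChain t' hodd' b' x hx)
    refine ⟨k - k', by omega, ?_, ?_, fun j => n (j + k'), ?_, ?_, ?_⟩
    · rw [← h1', ← Function.iterate_add_apply, show k - k' + k' = k by omega, h1]
    · intro j hj0 hjk
      rw [← h1', ← Function.iterate_add_apply]
      exact h2 (j + k') (by omega) (by omega)
    · intro j hj
      rw [← h1', ← Function.iterate_add_apply]
      exact h3 (j + k') (by omega)
    · intro j hj
      have hj' := h4 (j + k') (by omega)
      rw [show j + k' + 1 = j + 1 + k' by omega] at hj'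
      exact hj'
    · show n (k - k' - 1 + k') ≤ t
      rw [show k - k' - 1 + k' = k - 1 by omega]
      exact h5

end MV
end

section
/- In a directed layered graph H with source vertices r and g in the top layer, where every vertex has a path to the bottom layer l_0: if there exists a bottleneck (a vertex lying on every path from r to l_0 and every path from g to l_0), then there exists a unique highest bottleneck; otherwise there exist vertex-disjoint paths from r and g to two distinct vertices of l_0. -/
/-!
Layers strictly decrease along a path, and all bottlenecks lie on one path from `r`, so distinct
bottlenecks have distinct layers; hence the highest one is unique.

Without a bottleneck, disjoint paths from two sources `a`, `b` are found by induction on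
`layer a + layer b`. Let `a` be the higher source. If some successor `a'` of `a` has no common
bottleneck with `b`, prepend `a` to the disjoint paths from `a'` and `b`. Otherwise the lowest of
the bottlenecks of the pairs `a'`, `b` is a bottleneck of `a` and `b`.
-/

namespace MV

/-- `l` is a directed path starting at `x` and ending in layer `0`. -/
def PathTo0 {V : Type*} (E : V → V → Prop) (layer : V → ℕ) (x : V) (l : List V) : Prop :=
  l ≠ [] ∧ l.head? = some x ∧ List.Chain' E l ∧ ∃ z, l.getLast? = some z ∧ layer z = 0

/-- `v` is a bottleneck: it lies on every path from `r` to layer `0` and on every path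
from `g` to layer `0`. -/
def Bottleneck {V : Type*} (E : V → V → Prop) (layer : V → ℕ) (r g : V) (v : V) : Prop :=
  (∀ l, PathTo0 E layer r l → v ∈ l) ∧ (∀ l, PathTo0 E layer g l → v ∈ l)

section

variable {V : Type*} {E : V → V → Prop} {layer : V → ℕ}

lemma pairwise_layer_of_isChain (hmono : ∀ u v, E u v → layer v < layer u) {l : List V}
    (hl : l.IsChain E) : l.Pairwise fun u w => layer w < layer u := by
  have : IsTrans V fun u w => layer w < layer u := ⟨fun _ _ _ h₁ h₂ => h₂.trans h₁⟩
  exact List.isChain_iff_pairwise.mp (hl.imp hmono)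

namespace PathTo0

variable {x y : V} {l : List V}

lemma head_mem (hl : PathTo0 E layer x l) : x ∈ l :=
  List.mem_of_mem_head? hl.2.1

lemma singleton (hx : layer x = 0) : PathTo0 E layer x [x] :=
  ⟨List.cons_ne_nil _ _, rfl, List.isChain_singleton x, x, rfl, hx⟩

lemma exists_eq_cons (hl : PathTo0 E layer x l) : ∃ t, l = x :: t := by
  cases l with
  | nil => exact absurd rfl hl.1
  | cons c t => exact ⟨t, by simpa using hl.2.1⟩

lemma cons (hxy : E x y) (hl : PathTo0 E layer y l) : PathTo0 E layer x (x :: l) := by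
  obtain ⟨t, rfl⟩ := hl.exists_eq_cons
  obtain ⟨-, -, hchain, z, hz, hz0⟩ := hl
  exact ⟨List.cons_ne_nil _ _, rfl, List.isChain_cons_cons.mpr ⟨hxy, hchain⟩, z,
    by rwa [List.getLast?_cons_cons], hz0⟩

lemma exists_succ (hl : PathTo0 E layer x l) (hx : layer x ≠ 0) :
    ∃ y l', E x y ∧ PathTo0 E layer y l' ∧ l = x :: l' := by
  obtain ⟨t, rfl⟩ := hl.exists_eq_cons
  obtain ⟨-, -, hchain, z, hz, hz0⟩ := hl
  cases t with
  | nil =>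
    simp only [List.getLast?_singleton, Option.some.injEq] at hz
    exact absurd (hz ▸ hz0) hx
  | cons y t =>
    obtain ⟨hxy, hchain⟩ := List.isChain_cons_cons.mp hchain
    exact ⟨y, y :: t, hxy, ⟨List.cons_ne_nil _ _, rfl, hchain, z, by simpa using hz, hz0⟩, rfl⟩

lemma eq_or_layer_lt (hmono : ∀ u v, E u v → layer v < layer u) (hl : PathTo0 E layer x l) :
    ∀ u ∈ l, u = x ∨ layer u < layer x := by
  obtain ⟨t, rfl⟩ := hl.exists_eq_cons
  have hpw := List.pairwise_cons.mp (pairwise_layer_of_isChain hmono hl.2.2.1)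
  rintro u (_ | ⟨_, hu⟩)
  · exact Or.inl rfl
  · exact Or.inr (hpw.1 u hu)

lemma eq_of_layer_eq (hmono : ∀ u v, E u v → layer v < layer u) (hl : PathTo0 E layer x l)
    {u w : V} (hu : u ∈ l) (hw : w ∈ l) (huw : layer u = layer w) : u = w := by
  have : Std.Symm fun u w : V => layer u ≠ layer w := ⟨fun _ _ h => Ne.symm h⟩
  by_contra hne
  exact (pairwise_layer_of_isChain hmono hl.2.2.1).imp (fun h => h.ne')
    |>.forall hu hw hne huw

lemma splice (hmono : ∀ u v, E u v → layer v < layer u) {b v : V} {lb : List V}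
    (hb : PathTo0 E layer b lb) (hvb : v ∈ lb) (hl : PathTo0 E layer x l) (hv : v ∈ l) :
    ∃ l', PathTo0 E layer b l' ∧ ∀ u ∈ l', layer v < layer u ∨ u ∈ l := by
  obtain ⟨s, t, rfl⟩ := List.append_of_mem hvb
  obtain ⟨s', t', rfl⟩ := List.append_of_mem hv
  obtain ⟨-, hbhead, hbchain, hblast⟩ := hb
  obtain ⟨-, -, hchain, z, hz, hz0⟩ := hl
  have hchain_b : (s ++ [v]).IsChain E := by
    rw [List.append_cons] at hbchain
    exact List.IsChain.left_of_append hbchain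
  have hchain_l : (v :: t').IsChain E := (hchain : (s' ++ v :: t').IsChain E).right_of_append
  refine ⟨s ++ v :: t', ⟨by simp, ?_, ?_, z, ?_, hz0⟩, ?_⟩
  · cases s <;> simpa using hbhead
  · show (s ++ v :: t').IsChain E
    simpa using hchain_b.append_overlap (l₃ := t') hchain_l (by simp)
  · rwa [List.getLast?_append_of_ne_nil _ (by simp)] at hz ⊢
  · have hpw := List.pairwise_append.mp (pairwise_layer_of_isChain hmono hchain_b)
    intro u hu
    rcases List.mem_append.mp hu with hu | hu
    · exact Or.inl (hpw.2.2 u hu v (List.mem_singleton_self v))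
    · exact Or.inr (List.mem_append_right _ hu)

end PathTo0

namespace Bottleneck

variable {a b v : V}

lemma symm (hv : Bottleneck E layer a b v) : Bottleneck E layer b a v := ⟨hv.2, hv.1⟩

lemma self (a : V) : Bottleneck E layer a a a :=
  ⟨fun _ hl => hl.head_mem, fun _ hl => hl.head_mem⟩

lemma layer_le (hmono : ∀ u v, E u v → layer v < layer u) (ha : ∃ l, PathTo0 E layer a l)
    (hv : Bottleneck E layer a b v) : layer v ≤ layer a := by
  obtain ⟨l, hl⟩ := ha
  rcases hl.eq_or_layer_lt hmono v (hv.1 l hl) with rfl | h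
  exacts [le_rfl, h.le]

lemma eq_of_layer_eq (hmono : ∀ u v, E u v → layer v < layer u)
    (ha : ∃ l, PathTo0 E layer a l) {w : V} (hv : Bottleneck E layer a b v)
    (hw : Bottleneck E layer a b w) (hvw : layer v = layer w) : v = w := by
  obtain ⟨l, hl⟩ := ha
  exact hl.eq_of_layer_eq hmono (hv.1 l hl) (hw.1 l hl) hvw

end Bottleneck

theorem existsUnique_highest_bottleneck (hmono : ∀ u v, E u v → layer v < layer u) {r g : V}
    (hr : ∃ l, PathTo0 E layer r l) (hex : ∃ v, Bottleneck E layer r g v) :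
    ∃! b, Bottleneck E layer r g b ∧
      ∀ b', Bottleneck E layer r g b' → layer b' ≤ layer b := by
  set S := {n | ∃ v, Bottleneck E layer r g v ∧ layer v = n}
  have hS : BddAbove S := ⟨layer r, by rintro _ ⟨v, hv, rfl⟩; exact hv.layer_le hmono hr⟩
  obtain ⟨b, hb, hbS⟩ := Nat.sSup_mem (let ⟨v, hv⟩ := hex; ⟨_, v, hv, rfl⟩ : S.Nonempty) hS
  have hmax : ∀ b', Bottleneck E layer r g b' → layer b' ≤ layer b :=
    fun b' hb' => hbS ▸ le_csSup hS ⟨b', hb', rfl⟩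
  refine ⟨b, ⟨hb, hmax⟩, fun b' ⟨hb', hmax'⟩ => ?_⟩
  exact hb'.eq_of_layer_eq hmono hr hb (le_antisymm (hmax b' hb') (hmax' b hb))

/-- An `a`-path through the successor `a'` meets the bottleneck `w'` of `a'` and `b`; rerouting
a `b`-path into it at `w'` shows that it also meets the lowest such bottleneck `w₀`, which lies
below `w'`. -/
theorem exists_bottleneck_of_forall_succ (hmono : ∀ u v, E u v → layer v < layer u) {a b : V}
    (ha : ∃ l, PathTo0 E layer a l) (hb : ∃ l, PathTo0 E layer b l) (ha0 : layer a ≠ 0)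
    (hsucc : ∀ a', E a a' → ∃ w, Bottleneck E layer a' b w) :
    ∃ w, Bottleneck E layer a b w := by
  set S := {n | ∃ a' w, E a a' ∧ Bottleneck E layer a' b w ∧ layer w = n}
  have hS : S.Nonempty := by
    obtain ⟨l, hl⟩ := ha
    obtain ⟨a', -, haa', -⟩ := hl.exists_succ ha0
    obtain ⟨w, hw⟩ := hsucc a' haa'
    exact ⟨_, a', w, haa', hw, rfl⟩
  obtain ⟨_, w₀, -, hw₀, hw₀S⟩ := Nat.sInf_mem hS
  refine ⟨w₀, fun l hl => ?_, hw₀.2⟩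
  obtain ⟨a', l', haa', hl', rfl⟩ := hl.exists_succ ha0
  obtain ⟨w', hw'⟩ := hsucc a' haa'
  obtain ⟨lb, hlb⟩ := hb
  obtain ⟨l'', hl'', hmem⟩ := hlb.splice hmono (hw'.2 lb hlb) hl' (hw'.1 l' hl')
  have hle : layer w₀ ≤ layer w' := hw₀S ▸ Nat.sInf_le ⟨a', w', haa', hw', rfl⟩
  rcases hmem w₀ (hw₀.2 l'' hl'') with h | h
  · omega
  · exact List.mem_cons_of_mem a h

theorem exists_disjoint_paths_of_not_bottleneck (hmono : ∀ u v, E u v → layer v < layer u)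
    (hreach : ∀ x : V, ∃ l, PathTo0 E layer x l) {a b : V}
    (hnb : ¬ ∃ v, Bottleneck E layer a b v) :
    ∃ la lb : List V, PathTo0 E layer a la ∧ PathTo0 E layer b lb ∧ ∀ x ∈ la, x ∉ lb := by
  induction hn : layer a + layer b using Nat.strong_induction_on generalizing a b with
  | _ n ih =>
  wlog hba : layer b ≤ layer a generalizing a b
  · obtain ⟨lb, la, hlb, hla, hdisj⟩ :=
      this (fun ⟨v, hv⟩ => hnb ⟨v, hv.symm⟩) (by omega) (by omega)
    exact ⟨la, lb, hla, hlb, fun x hxa hxb => hdisj x hxb hxa⟩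
  have hab : a ≠ b := by
    rintro rfl
    exact hnb ⟨a, .self a⟩
  by_cases ha0 : layer a = 0
  · refine ⟨[a], [b], .singleton ha0, .singleton (by omega), ?_⟩
    simpa using hab
  by_cases hsucc : ∀ a', E a a' → ∃ w, Bottleneck E layer a' b w
  · exact absurd (exists_bottleneck_of_forall_succ hmono (hreach a) (hreach b) ha0 hsucc) hnb
  push Not at hsucc
  obtain ⟨a', haa', hnb'⟩ := hsucc
  obtain ⟨la, lb, hla, hlb, hdisj⟩ :=
    ih _ (by have := hmono a a' haa'; omega) (fun ⟨v, hv⟩ => hnb' v hv) rfl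
  refine ⟨a :: la, lb, hla.cons haa', hlb, ?_⟩
  rintro x (_ | ⟨_, hx⟩) hxb
  · rcases hlb.eq_or_layer_lt hmono a hxb with h | h
    exacts [hab h, by omega]
  · exact hdisj x hx hxb

end

theorem stmt18_general {V : Type*} (E : V → V → Prop) (layer : V → ℕ)
    (hmono : ∀ u v, E u v → layer v < layer u)
    (r g : V)
    (hreach : ∀ x : V, ∃ l, PathTo0 E layer x l) :
    ((∃ v, Bottleneck E layer r g v) →
      ∃! b, Bottleneck E layer r g b ∧
        ∀ b', Bottleneck E layer r g b' → layer b' ≤ layer b) ∧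
    ((¬ ∃ v, Bottleneck E layer r g v) →
      ∃ lr lg : List V, PathTo0 E layer r lr ∧ PathTo0 E layer g lg ∧
        ∀ x ∈ lr, x ∉ lg) :=
  ⟨existsUnique_highest_bottleneck hmono (hreach r),
    exists_disjoint_paths_of_not_bottleneck hmono hreach⟩

/-- In a directed layered graph with two sources `r`, `g` in the top layer, where every
vertex reaches the bottom layer: if a bottleneck exists then there is a unique highest
bottleneck; otherwise there are vertex-disjoint paths from `r` and `g` ending at two
distinct vertices of layer `0`. -/
theorem stmt18 {V : Type*} (E : V → V → Prop) (layer : V → ℕ) (h : ℕ)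
    (hbound : ∀ v, layer v ≤ h)
    (hmono : ∀ u v, E u v → layer v < layer u)
    (r g : V) (hr : layer r = h) (hg : layer g = h) (hrg : r ≠ g)
    (htop : ∀ v, layer v = h → v = r ∨ v = g)
    (hreach : ∀ x : V, ∃ l, PathTo0 E layer x l) :
    ((∃ v, Bottleneck E layer r g v) →
      ∃! b, Bottleneck E layer r g b ∧
        ∀ b', Bottleneck E layer r g b' → layer b' ≤ layer b) ∧
    ((¬ ∃ v, Bottleneck E layer r g v) →
      ∃ lr lg : List V, PathTo0 E layer r lr ∧ PathTo0 E layer g lg ∧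
        ∀ x ∈ lr, x ∉ lg) :=
  stmt18_general E layer hmono r g hreach

end MV
end
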